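/- arXiv:2505.07799 — 2 statements merged into one kernel-verified Lean document; each statement's English description precedes it below -/
import Mathlib

section
/- Let n ≥ 2, m ≥ 1, p ∈ (1,∞), ε₁, ε₂ > 0, and let f be an isomorphism of the unit distance graphs of L₁ = ℝⁿ × [0,ε₁]^m and L₂ = ℝⁿ × [0,ε₂]^m. If x₁, x₂ ∈ L₁ have equal projections onto ℝⁿ (i.e., lie in a common vertical fiber), then f(x₁) and f(x₂) have equal projections onto ℝⁿ. -/
noncomputable section

/-- The ℓ_p distance on \`ℝ^k\` (for a real exponent \`p\`). -/
def lpDist (p : ℝ) {k : ℕ} (x y : Fin k → ℝ) : ℝ :=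
  (∑ i, |x i - y i| ^ p) ^ (1 / p)

/-- The layer \`ℝⁿ × [0,ε]^m\` inside \`ℝ^{n+m}\`: the first \`n\` coordinates are free and
the last \`m\` coordinates lie in \`[0,ε]\`. -/
def Layer (n m : ℕ) (ε : ℝ) : Set (Fin (n + m) → ℝ) :=
  {x | ∀ i : Fin (n + m), n ≤ (i : ℕ) → x i ∈ Set.Icc 0 ε}

/-- The unit distance graph of the layer \`L(n,m,p,ε)\`: two (distinct) points are
adjacent iff their ℓ_p distance is exactly \`1\`. -/
def layerGraph (n m : ℕ) (p ε : ℝ) : SimpleGraph (Layer n m ε) where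
  Adj x y := x ≠ y ∧ lpDist p x.1 y.1 = 1
  symm := ⟨fun x y h => ⟨h.1.symm, by simpa [lpDist, abs_sub_comm] using h.2⟩⟩
  loopless := ⟨fun x h => h.1 rfl⟩

/-- Two points lie in a common vertical fiber: equal first \`n\` coordinates. -/
def SameVertical (n m : ℕ) (x y : Fin (n + m) → ℝ) : Prop :=
  ∀ i : Fin (n + m), (i : ℕ) < n → x i = y i

/-- Two points lie on a common horizontal slice (in particular, the line through two
such distinct points is parallel to \`ℝⁿ × {0}\`): equal last \`m\` coordinates. -/
def SameHorizontal (n m : ℕ) (x y : Fin (n + m) → ℝ) : Prop :=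
  ∀ i : Fin (n + m), n ≤ (i : ℕ) → x i = y i

namespace LayerAux

open Real Finset

variable {N : ℕ} {p : ℝ}

/-- The ℓ_p "norm" of a vector. -/
def np (p : ℝ) (w : Fin N → ℝ) : ℝ := (∑ i, |w i| ^ p) ^ (1/p)

section basic
variable (hp : 1 < p)
include hp

lemma hp0 : 0 < p := lt_trans one_pos hp

lemma sum_nonneg' (w : Fin N → ℝ) : 0 ≤ ∑ i, |w i| ^ p :=
  Finset.sum_nonneg fun i _ => Real.rpow_nonneg (abs_nonneg _) _

lemma np_nonneg (w : Fin N → ℝ) : 0 ≤ np p w :=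
  Real.rpow_nonneg (sum_nonneg' hp w) _

lemma np_pow (w : Fin N → ℝ) : (np p w) ^ p = ∑ i, |w i| ^ p := by
  rw [np, one_div, Real.rpow_inv_rpow (sum_nonneg' hp w) (ne_of_gt (hp0 hp))]

lemma np_eq_of_sum_eq {w : Fin N → ℝ} {r : ℝ} (hr : 0 ≤ r)
    (h : ∑ i, |w i| ^ p = r ^ p) : np p w = r := by
  rw [np, h, one_div, Real.rpow_rpow_inv hr (ne_of_gt (hp0 hp))]

lemma rpow_inj {x y : ℝ} (hx : 0 ≤ x) (hy : 0 ≤ y) (h : x ^ p = y ^ p) : x = y := by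
  rcases lt_trichotomy x y with h' | h' | h'
  · exact absurd h (ne_of_lt (Real.rpow_lt_rpow hx h' (hp0 hp)))
  · exact h'
  · exact absurd h (ne_of_gt (Real.rpow_lt_rpow hy h' (hp0 hp)))

lemma sum_eq_of_np_eq {w : Fin N → ℝ} {r : ℝ} (h : np p w = r) :
    ∑ i, |w i| ^ p = r ^ p := by
  rw [← np_pow hp, h]

lemma np_lt_iff {w : Fin N → ℝ} {r : ℝ} (hr : 0 ≤ r) :
    np p w < r ↔ ∑ i, |w i| ^ p < r ^ p := by
  constructor
  · intro h
    have := Real.rpow_lt_rpow (np_nonneg hp w) h (hp0 hp)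
    rwa [np_pow hp] at this
  · intro h
    have := Real.rpow_lt_rpow (sum_nonneg' hp w) h (by positivity : (0:ℝ) < 1/p)
    rwa [← np, one_div, Real.rpow_rpow_inv hr (ne_of_gt (hp0 hp))] at this

lemma np_lt_of_sum_lt {w : Fin N → ℝ} {r : ℝ} (hr : 0 ≤ r)
    (h : ∑ i, |w i| ^ p < r ^ p) : np p w < r := (np_lt_iff hp hr).2 h

lemma np_gt_of_sum_gt {w : Fin N → ℝ} {r : ℝ} (hr : 0 ≤ r)
    (h : r ^ p < ∑ i, |w i| ^ p) : r < np p w := by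
  by_contra hle
  push_neg at hle
  rcases eq_or_lt_of_le hle with he | hlt
  · rw [← he] at h; rw [np_pow hp] at h; exact lt_irrefl _ h
  · exact absurd h (not_lt.2 (le_of_lt ((np_lt_iff hp hr).1 hlt)))

lemma np_zero : np p (0 : Fin N → ℝ) = 0 := by
  apply np_eq_of_sum_eq hp le_rfl
  rw [Real.zero_rpow (ne_of_gt (hp0 hp))]
  apply Finset.sum_eq_zero
  intro i _
  simp [Real.zero_rpow (ne_of_gt (hp0 hp))]

lemma np_eq_zero_iff {w : Fin N → ℝ} : np p w = 0 ↔ w = 0 := by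
  constructor
  · intro h
    have hs := sum_eq_of_np_eq hp h
    rw [Real.zero_rpow (ne_of_gt (hp0 hp))] at hs
    have : ∀ i ∈ Finset.univ, |w i| ^ p = 0 := by
      intro i hi
      exact (Finset.sum_eq_zero_iff_of_nonneg
        (fun j _ => Real.rpow_nonneg (abs_nonneg _) _)).1 hs i hi
    funext i
    have := this i (Finset.mem_univ i)
    have h2 : |w i| = 0 := by
      by_contra hne
      have : (0:ℝ) < |w i| := lt_of_le_of_ne (abs_nonneg _) (Ne.symm hne)
      exact absurd ‹|w i| ^ p = 0› (ne_of_gt (Real.rpow_pos_of_pos this p))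
    simpa using abs_eq_zero.1 h2
  · intro h; rw [h]; exact np_zero hp

lemma np_smul (t : ℝ) (w : Fin N → ℝ) : np p (t • w) = |t| * np p w := by
  apply np_eq_of_sum_eq hp (mul_nonneg (abs_nonneg _) (np_nonneg hp w))
  rw [Real.mul_rpow (abs_nonneg _) (np_nonneg hp w), np_pow hp, Finset.mul_sum]
  apply Finset.sum_congr rfl
  intro i _
  rw [Pi.smul_apply, smul_eq_mul, abs_mul, Real.mul_rpow (abs_nonneg _) (abs_nonneg _)]

lemma np_neg (w : Fin N → ℝ) : np p (-w) = np p w := by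
  have : (-w) = (-1 : ℝ) • w := by funext i; simp
  rw [this, np_smul hp]; simp

lemma coord_le_np (w : Fin N → ℝ) (i : Fin N) : |w i| ≤ np p w := by
  have h1 : |w i| ^ p ≤ ∑ j, |w j| ^ p :=
    Finset.single_le_sum (fun j _ => Real.rpow_nonneg (abs_nonneg _) _) (Finset.mem_univ i)
  have := Real.rpow_le_rpow (Real.rpow_nonneg (abs_nonneg _) _) h1 (by positivity : (0:ℝ) ≤ 1/p)
  have h2 : (|w i| ^ p) ^ (1/p) = |w i| := by
    rw [one_div]; exact Real.rpow_rpow_inv (abs_nonneg _) (ne_of_gt (hp0 hp))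
  rw [np, ← h2]
  exact this


lemma np_eq_of_pow_eq {w : Fin N → ℝ} {r : ℝ} (hr : 0 ≤ r)
    (h : (np p w) ^ p = r ^ p) : np p w = r :=
  rpow_inj hp (np_nonneg hp w) hr h

lemma lt_of_rpow_lt {a b : ℝ} (ha : 0 ≤ a) (hb : 0 ≤ b) (h : a ^ p < b ^ p) : a < b := by
  by_contra hle
  push_neg at hle
  exact absurd h (not_lt.2 (Real.rpow_le_rpow hb hle (le_of_lt (hp0 hp))))

end basic

section convex
variable (hp : 1 < p)
include hp

lemma convex2 {a b : ℝ} (ha : 0 ≤ a) (hb : 0 ≤ b) :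
    ((a+b)/2) ^ p ≤ (a^p + b^p)/2 := by
  have h := (strictConvexOn_rpow hp).convexOn.2 (Set.mem_Ici.2 ha) (Set.mem_Ici.2 hb)
    (by norm_num : (0:ℝ) ≤ 1/2) (by norm_num : (0:ℝ) ≤ 1/2) (by norm_num)
  simp only [smul_eq_mul] at h
  calc ((a+b)/2) ^ p = (1/2*a + 1/2*b) ^ p := by ring_nf
    _ ≤ 1/2 * a^p + 1/2*b^p := h
    _ = (a^p + b^p)/2 := by ring

lemma convex2_strict {a b : ℝ} (ha : 0 ≤ a) (hb : 0 ≤ b) (hab : a ≠ b) :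
    ((a+b)/2) ^ p < (a^p + b^p)/2 := by
  have h := (strictConvexOn_rpow hp).2 (Set.mem_Ici.2 ha) (Set.mem_Ici.2 hb) hab
    (by norm_num : (0:ℝ) < 1/2) (by norm_num : (0:ℝ) < 1/2) (by norm_num)
  simp only [smul_eq_mul] at h
  calc ((a+b)/2) ^ p = (1/2*a + 1/2*b) ^ p := by ring_nf
    _ < 1/2 * a^p + 1/2*b^p := h
    _ = (a^p + b^p)/2 := by ring

lemma abs_term_le (x y : ℝ) : |x + y| ^ p ≤ 2^p * ((|x|^p + |y|^p)/2) := by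
  have h1 : |x + y| ^ p ≤ (|x| + |y|) ^ p :=
    Real.rpow_le_rpow (abs_nonneg _) (abs_add_le x y) (le_of_lt (hp0 hp))
  have h2 : (|x| + |y|) ^ p = 2^p * ((|x| + |y|)/2) ^ p := by
    rw [← Real.mul_rpow (by norm_num) (by positivity)]
    ring_nf
  have h3 : ((|x| + |y|)/2) ^ p ≤ (|x|^p + |y|^p)/2 :=
    convex2 hp (abs_nonneg _) (abs_nonneg _)
  calc |x + y| ^ p ≤ (|x| + |y|) ^ p := h1
    _ = 2^p * ((|x| + |y|)/2) ^ p := h2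
    _ ≤ 2^p * ((|x|^p + |y|^p)/2) :=
        mul_le_mul_of_nonneg_left h3 (Real.rpow_nonneg (by norm_num) _)

lemma sum_bound {u v : Fin N → ℝ} (hu : np p u = 1) (hv : np p v = 1) :
    ∑ i, |u i + v i| ^ p ≤ 2 ^ p := by
  have hSu : ∑ i, |u i| ^ p = 1 := by
    have := sum_eq_of_np_eq hp hu; rwa [Real.one_rpow] at this
  have hSv : ∑ i, |v i| ^ p = 1 := by
    have := sum_eq_of_np_eq hp hv; rwa [Real.one_rpow] at this
  calc ∑ i, |u i + v i| ^ p ≤ ∑ i, 2^p * ((|u i|^p + |v i|^p)/2) :=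
        Finset.sum_le_sum fun i _ => abs_term_le hp (u i) (v i)
    _ = 2^p * ((∑ i, |u i|^p + ∑ i, |v i|^p)/2) := by
        rw [← Finset.mul_sum, ← Finset.sum_div, Finset.sum_add_distrib]
    _ = 2^p := by rw [hSu, hSv]; ring

lemma np_le_of_sum_le {w : Fin N → ℝ} {r : ℝ} (hr : 0 ≤ r)
    (h : ∑ i, |w i| ^ p ≤ r ^ p) : np p w ≤ r := by
  have := Real.rpow_le_rpow (sum_nonneg' hp w) h (by positivity : (0:ℝ) ≤ 1/p)
  rwa [← np, one_div, Real.rpow_rpow_inv hr (ne_of_gt (hp0 hp))] at this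

lemma np_add_le {u v : Fin N → ℝ} (hu : np p u = 1) (hv : np p v = 1) :
    np p (u + v) ≤ 2 := by
  apply np_le_of_sum_le hp (by norm_num)
  have := sum_bound hp hu hv
  simpa using this

lemma eql {u v : Fin N → ℝ} (hu : np p u = 1) (hv : np p v = 1)
    (huv : np p (u + v) = 2) : u = v := by
  have hSu : ∑ i, |u i| ^ p = 1 := by
    have := sum_eq_of_np_eq hp hu; rwa [Real.one_rpow] at this
  have hSv : ∑ i, |v i| ^ p = 1 := by
    have := sum_eq_of_np_eq hp hv; rwa [Real.one_rpow] at this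
  have hSuv : ∑ i, |u i + v i| ^ p = 2 ^ p := by
    have := sum_eq_of_np_eq hp huv
    simpa using this
  have hsum : ∑ i, |u i + v i| ^ p = ∑ i, 2^p * ((|u i|^p + |v i|^p)/2) := by
    rw [hSuv, ← Finset.mul_sum, ← Finset.sum_div, Finset.sum_add_distrib, hSu, hSv]
    ring
  have hterm : ∀ i ∈ Finset.univ, |u i + v i| ^ p = 2^p * ((|u i|^p + |v i|^p)/2) :=
    fun i hi => (Finset.sum_eq_sum_iff_of_le
      (fun j _ => abs_term_le hp (u j) (v j))).1 hsum i hi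
  funext i
  have he := hterm i (Finset.mem_univ i)
  -- first: |u i| = |v i|
  have habs : |u i| = |v i| := by
    by_contra hne
    have hstrict : ((|u i| + |v i|)/2) ^ p < (|u i|^p + |v i|^p)/2 :=
      convex2_strict hp (abs_nonneg _) (abs_nonneg _) hne
    have h1 : |u i + v i| ^ p ≤ (|u i| + |v i|) ^ p :=
      Real.rpow_le_rpow (abs_nonneg _) (abs_add_le _ _) (le_of_lt (hp0 hp))
    have h2 : (|u i| + |v i|) ^ p = 2^p * ((|u i| + |v i|)/2) ^ p := by
      rw [← Real.mul_rpow (by norm_num) (by positivity)]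
      ring_nf
    have hlt : |u i + v i| ^ p < 2^p * ((|u i|^p + |v i|^p)/2) := by
      calc |u i + v i| ^ p ≤ 2^p * ((|u i| + |v i|)/2) ^ p := by rw [← h2]; exact h1
        _ < 2^p * ((|u i|^p + |v i|^p)/2) := by
            apply mul_lt_mul_of_pos_left hstrict
            exact Real.rpow_pos_of_pos (by norm_num) _
    exact absurd he (ne_of_lt hlt)
  -- then: |u i + v i| = 2 |u i|
  have he2 : |u i + v i| ^ p = (2 * |u i|) ^ p := by
    rw [he, ← habs, Real.mul_rpow (by norm_num) (abs_nonneg _)]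
    ring_nf
  have habs2 : |u i + v i| = 2 * |u i| := by
    refine rpow_inj hp (abs_nonneg _) (by positivity) ?_
    rw [he2]
  rcases abs_eq_abs.1 habs with h' | h'
  · exact h'
  · have hz : u i + v i = 0 := by rw [h']; ring
    rw [hz, abs_zero] at habs2
    have hu0 : u i = 0 := abs_eq_zero.1 (by linarith [abs_nonneg (u i)])
    have hv0 : v i = 0 := abs_eq_zero.1 (by rw [← habs, hu0, abs_zero])
    rw [hu0, hv0]

end convex

section vec
variable (hp : 1 < p)
include hp

lemma step_eq {a b c : Fin N → ℝ} (h1 : np p (b - a) = 1) (h2 : np p (c - b) = 1)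
    (h3 : np p (c - a) = 2) : c - b = b - a := by
  have hsum : (b - a) + (c - b) = c - a := by abel
  exact (eql hp h1 h2 (by rw [hsum]; exact h3)).symm

lemma midpoint_unique {a b w w' : Fin N → ℝ} (h1 : np p (w - a) = 1)
    (h2 : np p (b - w) = 1) (h3 : np p (b - a) = 2)
    (h1' : np p (w' - a) = 1) (h2' : np p (b - w') = 1) : w = w' := by
  have e1 : w - a = b - w := eql hp h1 h2 (by rw [show (w-a)+(b-w) = b - a by abel]; exact h3)
  have e2 : w' - a = b - w' := eql hp h1' h2' (by rw [show (w'-a)+(b-w') = b - a by abel]; exact h3)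
  funext i
  have c1 := congrFun e1 i
  have c2 := congrFun e2 i
  simp only [Pi.sub_apply] at c1 c2
  linarith

lemma np_continuous : Continuous fun w : Fin N → ℝ => np p w := by
  apply Continuous.rpow_const
  · apply continuous_finset_sum
    intro i _
    exact ((continuous_apply i).abs).rpow_const (fun x => Or.inr (le_of_lt (hp0 hp)))
  · intro x; exact Or.inr (by positivity)

lemma np_sub_rev (x y : Fin N → ℝ) : np p (x - y) = np p (y - x) := by
  rw [show x - y = -(y - x) by abel, np_neg hp]

lemma np_pos {w : Fin N → ℝ} (hw : w ≠ 0) : 0 < np p w :=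
  lt_of_le_of_ne (np_nonneg hp w) (fun h => hw ((np_eq_zero_iff hp).1 h.symm))

end vec

section layer

variable {n m : ℕ}

/-- A vector is horizontal if all its vertical coordinates vanish. -/
def Horiz (n m : ℕ) (w : Fin (n + m) → ℝ) : Prop :=
  ∀ i : Fin (n + m), n ≤ (i : ℕ) → w i = 0

lemma Horiz.add {w w' : Fin (n+m) → ℝ} (h : Horiz n m w) (h' : Horiz n m w') :
    Horiz n m (w + w') := fun i hi => by simp [h i hi, h' i hi]

lemma Horiz.smul {w : Fin (n+m) → ℝ} (h : Horiz n m w) (t : ℝ) :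
    Horiz n m (t • w) := fun i hi => by simp [h i hi]

lemma Horiz.neg {w : Fin (n+m) → ℝ} (h : Horiz n m w) : Horiz n m (-w) :=
  fun i hi => by simp [h i hi]

lemma Horiz.zero : Horiz n m (0 : Fin (n+m) → ℝ) := fun i _ => rfl

lemma mem_layer_add_horiz {ε : ℝ} {x : Fin (n+m) → ℝ} (hx : x ∈ Layer n m ε)
    {w : Fin (n+m) → ℝ} (hw : Horiz n m w) : x + w ∈ Layer n m ε := by
  intro i hi
  have := hx i hi
  simpa [hw i hi] using this

/-- Convex combinations of layer points are in the layer. -/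
lemma mem_layer_comb {ε : ℝ} {x y : Fin (n+m) → ℝ} (hx : x ∈ Layer n m ε)
    (hy : y ∈ Layer n m ε) {t : ℝ} (h0 : 0 ≤ t) (h1 : t ≤ 1) :
    x + t • (y - x) ∈ Layer n m ε := by
  intro i hi
  have hxi := hx i hi
  have hyi := hy i hi
  have : x i + t * (y i - x i) = (1 - t) * x i + t * y i := by ring
  simp only [Pi.add_apply, Pi.smul_apply, Pi.sub_apply, smul_eq_mul, this]
  constructor
  · have := mul_nonneg (by linarith : (0:ℝ) ≤ 1 - t) hxi.1
    have := mul_nonneg h0 hyi.1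
    linarith
  · have h1' := mul_le_mul_of_nonneg_left hxi.2 (by linarith : (0:ℝ) ≤ 1 - t)
    have h2' := mul_le_mul_of_nonneg_left hyi.2 h0
    nlinarith

/-- The coordinate unit vector. -/
def evec (j : Fin (n+m)) : Fin (n+m) → ℝ := fun i => if i = j then 1 else 0

lemma np_evec {p : ℝ} (hp : 1 < p) (j : Fin (n+m)) : np p (evec j) = 1 := by
  apply np_eq_of_sum_eq hp (by norm_num)
  rw [Real.one_rpow]
  rw [Finset.sum_eq_single j]
  · simp [evec]
  · intro i _ hij
    simp [evec, hij, Real.zero_rpow (ne_of_gt (hp0 hp))]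
  · intro h; exact absurd (Finset.mem_univ j) h

lemma evec_horiz (j : Fin (n+m)) (hj : (j : ℕ) < n) : Horiz n m (evec j) := by
  intro i hi
  have : i ≠ j := by
    intro h; rw [h] at hi; omega
  simp [evec, this]

/-- Splitting the p-sum into horizontal and vertical parts. -/
lemma np_split {p : ℝ} (hp : 1 < p) (w : Fin (n+m) → ℝ) :
    (np p w) ^ p = (∑ i ∈ Finset.univ.filter (fun i : Fin (n+m) => (i:ℕ) < n), |w i| ^ p)
      + ∑ i ∈ Finset.univ.filter (fun i : Fin (n+m) => ¬ (i:ℕ) < n), |w i| ^ p := by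
  rw [np_pow hp]
  exact (Finset.sum_filter_add_sum_filter_not _ _ _).symm

lemma np_horiz_sum {p : ℝ} (hp : 1 < p) {w : Fin (n+m) → ℝ} (hw : Horiz n m w) :
    (np p w) ^ p = ∑ i ∈ Finset.univ.filter (fun i : Fin (n+m) => (i:ℕ) < n), |w i| ^ p := by
  rw [np_split hp w]
  have : ∑ i ∈ Finset.univ.filter (fun i : Fin (n+m) => ¬ (i:ℕ) < n), |w i| ^ p = 0 := by
    apply Finset.sum_eq_zero
    intro i hi
    rw [Finset.mem_filter] at hi
    rw [hw i (not_lt.1 hi.2), abs_zero, Real.zero_rpow (ne_of_gt (hp0 hp))]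
  rw [this, add_zero]

end layer

section construct

variable {n m : ℕ}

/-- Horizontal truncation. -/
def hcut (n m : ℕ) (d : Fin (n+m) → ℝ) : Fin (n+m) → ℝ :=
  fun i => if (i:ℕ) < n then d i else 0

/-- Vertical truncation. -/
def vcut (n m : ℕ) (d : Fin (n+m) → ℝ) : Fin (n+m) → ℝ :=
  fun i => if (i:ℕ) < n then 0 else d i

lemma hcut_horiz (d : Fin (n+m) → ℝ) : Horiz n m (hcut n m d) := by
  intro i hi
  simp [hcut, not_lt.2 hi]

lemma vcut_vert (d : Fin (n+m) → ℝ) : ∀ i : Fin (n+m), (i:ℕ) < n → vcut n m d i = 0 := by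
  intro i hi; simp [vcut, hi]

lemma hcut_add_vcut (d : Fin (n+m) → ℝ) : hcut n m d + vcut n m d = d := by
  funext i
  by_cases h : (i:ℕ) < n <;> simp [hcut, vcut, h]

/-- Key split computation: horizontal + vertical decomposition of the p-sum. -/
lemma np_pow_split' {p : ℝ} (hp : 1 < p) {w v : Fin (n+m) → ℝ} (hw : Horiz n m w)
    (hv : ∀ i : Fin (n+m), (i:ℕ) < n → v i = 0) :
    (np p (w + v)) ^ p = (np p w) ^ p
      + ∑ i ∈ Finset.univ.filter (fun i : Fin (n+m) => ¬ (i:ℕ) < n), |v i| ^ p := by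
  rw [np_split hp (w+v), np_horiz_sum hp hw]
  congr 1
  · apply Finset.sum_congr rfl
    intro i hi
    rw [Finset.mem_filter] at hi
    rw [Pi.add_apply, hv i hi.2, add_zero]
  · apply Finset.sum_congr rfl
    intro i hi
    rw [Finset.mem_filter] at hi
    rw [Pi.add_apply, hw i (not_lt.1 hi.2), zero_add]

/-- The path lemma: a continuous path of horizontal unit vectors from `d/|d|` to `-d/|d|`. -/
lemma path_lemma (hn : 2 ≤ n) {p : ℝ} (hp : 1 < p) {d : Fin (n+m) → ℝ}
    (hd : d ≠ 0) (hdh : Horiz n m d) :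
    ∃ u : ℝ → (Fin (n+m) → ℝ), Continuous u ∧ (∀ t, Horiz n m (u t)) ∧
      (∀ t, np p (u t) = 1) ∧ u 0 = (np p d)⁻¹ • d ∧ u 1 = -((np p d)⁻¹ • d) := by
  obtain ⟨istar, histar⟩ : ∃ i, d i ≠ 0 := by
    by_contra h
    push_neg at h
    exact hd (funext fun i => h i)
  have histar_lt : (istar : ℕ) < n := by
    by_contra h
    exact histar (hdh istar (not_lt.1 h))
  have hnm : 1 < n + m := by omega
  set j : Fin (n+m) := if (istar : ℕ) = 0 then ⟨1, by omega⟩ else ⟨0, by omega⟩ with hj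
  have hj_lt : (j : ℕ) < n := by
    rw [hj]
    split <;> simp <;> omega
  have hj_ne : j ≠ istar := by
    rw [hj]
    split
    · intro h
      have := congrArg (fun x : Fin (n+m) => (x:ℕ)) h
      simp at this
      omega
    · intro h
      have := congrArg (fun x : Fin (n+m) => (x:ℕ)) h
      simp at this
      omega
  have hnpd : 0 < np p d := np_pos hp hd
  set d' : Fin (n+m) → ℝ := (np p d)⁻¹ • d with hd'
  have hd'_np : np p d' = 1 := by
    rw [hd', np_smul hp, abs_of_pos (inv_pos.2 hnpd), inv_mul_cancel₀ (ne_of_gt hnpd)]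
  have hd'_i : d' istar ≠ 0 := by
    rw [hd']
    simp only [Pi.smul_apply, smul_eq_mul]
    exact mul_ne_zero (inv_ne_zero (ne_of_gt hnpd)) histar
  set v : ℝ → (Fin (n+m) → ℝ) := fun t => (1 - 2*t) • d' + (4*t*(1-t)) • evec j with hv
  have hv_cont : Continuous v := by
    apply Continuous.add
    · exact (continuous_const.sub (continuous_const.mul continuous_id)).smul continuous_const
    · exact ((continuous_const.mul continuous_id).mul
        (continuous_const.sub continuous_id)).smul continuous_const
  have hv_ne : ∀ t, v t ≠ 0 := by
    intro t hzero
    have h1 : v t istar = 0 := by rw [hzero]; rfl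
    have hevec : evec j istar = 0 := by simp [evec, Ne.symm hj_ne]
    rw [hv] at h1
    simp only [Pi.add_apply, Pi.smul_apply, smul_eq_mul, hevec, mul_zero, add_zero] at h1
    have ht : t = 1/2 := by
      rcases mul_eq_zero.1 h1 with h | h
      · linarith
      · exact absurd h hd'_i
    have h2 : v t j = 0 := by rw [hzero]; rfl
    rw [hv] at h2
    have hevecj : evec j j = 1 := by simp [evec]
    simp only [Pi.add_apply, Pi.smul_apply, smul_eq_mul, hevecj, mul_one, ht] at h2
    norm_num at h2
  refine ⟨fun t => (np p (v t))⁻¹ • v t, ?_, ?_, ?_, ?_, ?_⟩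
  · exact (((np_continuous hp).comp hv_cont).inv₀
      (fun t => ne_of_gt (np_pos hp (hv_ne t)))).smul hv_cont
  · intro t
    apply Horiz.smul
    apply Horiz.add
    · exact (hdh.smul _).smul _
    · exact (evec_horiz j hj_lt).smul _
  · intro t
    rw [np_smul hp, abs_of_pos (inv_pos.2 (np_pos hp (hv_ne t))),
      inv_mul_cancel₀ (ne_of_gt (np_pos hp (hv_ne t)))]
  · have hv0 : v 0 = d' := by
      show (1 - 2*(0:ℝ)) • d' + (4*(0:ℝ)*(1-(0:ℝ))) • evec j = d'
      norm_num
    show (np p (v 0))⁻¹ • v 0 = (np p d)⁻¹ • d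
    rw [hv0, hd'_np]
    norm_num
    exact hd'
  · have hv1 : v 1 = -d' := by
      show (1 - 2*(1:ℝ)) • d' + (4*(1:ℝ)*(1-(1:ℝ))) • evec j = -d'
      norm_num
    show (np p (v 1))⁻¹ • v 1 = -((np p d)⁻¹ • d)
    rw [hv1, np_neg hp, hd'_np]
    norm_num
    exact hd'

/-- Any two distinct layer points at distance < 2 have two distinct common neighbors. -/
lemma second_neighbor (hn : 2 ≤ n) {p ε : ℝ} (hp : 1 < p)
    {A B : Fin (n+m) → ℝ} (hA : A ∈ Layer n m ε) (hB : B ∈ Layer n m ε)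
    (hAB : A ≠ B) (hlt : np p (B - A) < 2) :
    ∃ w₁ w₂ : Fin (n+m) → ℝ, w₁ ∈ Layer n m ε ∧ w₂ ∈ Layer n m ε ∧ w₁ ≠ w₂ ∧
      np p (w₁ - A) = 1 ∧ np p (B - w₁) = 1 ∧ np p (w₂ - A) = 1 ∧ np p (B - w₂) = 1 := by
  have hp0' : (0:ℝ) < p := hp0 hp
  set d := B - A with hdDef
  have hd0 : d ≠ 0 := sub_ne_zero.2 (Ne.symm hAB)
  set dh := hcut n m d with hdh
  set dv := vcut n m d with hdv
  have hdhv : dh + dv = d := hcut_add_vcut d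
  have hvert : ∀ i : Fin (n+m), (i:ℕ) < n → ((1/2 : ℝ) • dv) i = 0 := by
    intro i hi
    simp [vcut_vert d i hi, hdv]
  set Cv := ∑ i ∈ Finset.univ.filter (fun i : Fin (n+m) => ¬ (i:ℕ) < n),
      |((1/2 : ℝ) • dv) i| ^ p with hCv
  -- Cv < 1
  have hCv_eq : ∀ i : Fin (n+m), ¬ (i:ℕ) < n → |((1/2:ℝ) • dv) i| = |((1/2:ℝ) • d) i| := by
    intro i hi
    simp only [Pi.smul_apply, smul_eq_mul, hdv, vcut, if_neg hi]
  have hCv_le : Cv ≤ (np p ((1/2 : ℝ) • d)) ^ p := by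
    rw [np_split hp ((1/2 : ℝ) • d), hCv]
    have h1 : ∑ i ∈ Finset.univ.filter (fun i : Fin (n+m) => ¬ (i:ℕ) < n),
        |((1/2:ℝ) • dv) i| ^ p = ∑ i ∈ Finset.univ.filter (fun i : Fin (n+m) => ¬ (i:ℕ) < n),
        |((1/2:ℝ) • d) i| ^ p := by
      apply Finset.sum_congr rfl
      intro i hi
      rw [Finset.mem_filter] at hi
      rw [hCv_eq i hi.2]
    rw [h1]
    have h2 : (0:ℝ) ≤ ∑ i ∈ Finset.univ.filter (fun i : Fin (n+m) => (i:ℕ) < n),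
        |((1/2:ℝ) • d) i| ^ p :=
      Finset.sum_nonneg fun i _ => Real.rpow_nonneg (abs_nonneg _) _
    linarith
  have hhalf : np p ((1/2 : ℝ) • d) < 1 := by
    rw [np_smul hp]
    rw [hdDef] at hlt ⊢
    rw [abs_of_pos (by norm_num : (0:ℝ) < 1/2)]
    linarith
  have hCv_lt : Cv < 1 := by
    apply lt_of_le_of_lt hCv_le
    calc (np p ((1/2:ℝ) • d)) ^ p < 1 ^ p :=
          Real.rpow_lt_rpow (np_nonneg hp _) hhalf hp0'
      _ = 1 := Real.one_rpow p
  have hCv_nonneg : 0 ≤ Cv :=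
    Finset.sum_nonneg fun i _ => Real.rpow_nonneg (abs_nonneg _) _
  set r := (1 - Cv) ^ (1/p : ℝ) with hr
  have hr_pos : 0 < r := Real.rpow_pos_of_pos (by linarith) _
  have hr_pow : r ^ p = 1 - Cv := by
    rw [hr, one_div, Real.rpow_inv_rpow (by linarith) (ne_of_gt hp0')]
  -- the distance of a candidate with horizontal offset w from A resp. B
  have key : ∀ w : Fin (n+m) → ℝ, Horiz n m w →
      (np p (w + (1/2:ℝ) • dv)) ^ p = (np p w) ^ p + Cv := by
    intro w hw
    rw [np_pow_split' hp hw hvert]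
  set M := A + (1/2 : ℝ) • d with hM
  have hM_mem : M ∈ Layer n m ε := by
    rw [hM, hdDef]
    exact mem_layer_comb hA hB (by norm_num) (by norm_num)
  have hnp_one : ∀ w : Fin (n+m) → ℝ, Horiz n m w → np p w = r →
      np p (w + (1/2:ℝ) • dv) = 1 := by
    intro w hw hnpw
    apply np_eq_of_pow_eq hp (by norm_num)
    rw [key w hw, hnpw, hr_pow, Real.one_rpow]
    ring
  by_cases hdh0 : dh = 0
  · -- purely vertical case: use two opposite horizontal unit offsets
    have hj0 : (0:ℕ) < n := by omega
    set j0 : Fin (n+m) := (⟨0, by omega⟩ : Fin (n+m)) with hj0def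
    have hj0lt : (j0 : ℕ) < n := hj0
    have hde : d = dv := by rw [← hdhv, hdh0, zero_add]
    have hnpr : ∀ s : ℝ, |s| = r → np p (s • evec j0) = r := by
      intro s hs
      rw [np_smul hp, np_evec hp, mul_one, hs]
    have habs1 : |r| = r := abs_of_pos hr_pos
    have habs2 : |(-r)| = r := by rw [abs_neg]; exact habs1
    refine ⟨M + r • evec j0, M + (-r) • evec j0,
      mem_layer_add_horiz hM_mem ((evec_horiz j0 hj0lt).smul r),
      mem_layer_add_horiz hM_mem ((evec_horiz j0 hj0lt).smul (-r)), ?_, ?_, ?_, ?_, ?_⟩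
    · intro h
      have h2 := congrFun h j0
      have he : evec j0 j0 = 1 := by simp [evec]
      simp only [Pi.add_apply, Pi.smul_apply, smul_eq_mul, he, mul_one] at h2
      have : r = 0 := by linarith
      exact absurd this (ne_of_gt hr_pos)
    · have e1 : M + r • evec j0 - A = (r • evec j0) + (1/2:ℝ) • dv := by
        rw [hM, hde]; module
      rw [e1]
      exact hnp_one _ ((evec_horiz j0 hj0lt).smul r) (hnpr r habs1)
    · have e2 : B - (M + r • evec j0) = ((-r) • evec j0) + (1/2:ℝ) • dv := by
        rw [hM]
        have : B = A + d := by rw [hdDef]; abel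
        rw [this, hde]; module
      rw [e2]
      exact hnp_one _ ((evec_horiz j0 hj0lt).smul (-r)) (hnpr (-r) habs2)
    · have e3 : M + (-r) • evec j0 - A = ((-r) • evec j0) + (1/2:ℝ) • dv := by
        rw [hM, hde]; module
      rw [e3]
      exact hnp_one _ ((evec_horiz j0 hj0lt).smul (-r)) (hnpr (-r) habs2)
    · have e4 : B - (M + (-r) • evec j0) = (r • evec j0) + (1/2:ℝ) • dv := by
        rw [hM]
        have : B = A + d := by rw [hdDef]; abel
        rw [this, hde]; module
      rw [e4]
      exact hnp_one _ ((evec_horiz j0 hj0lt).smul r) (hnpr r habs1)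
  · -- the horizontal displacement is nonzero: use the path + IVT
    have hδpos : 0 < np p dh := np_pos hp hdh0
    set δ := np p dh with hδdef
    -- δ < 2r
    have hsum_h : δ ^ p = ∑ i ∈ Finset.univ.filter (fun i : Fin (n+m) => (i:ℕ) < n),
        |d i| ^ p := by
      rw [hδdef, np_horiz_sum hp (hcut_horiz d)]
      apply Finset.sum_congr rfl
      intro i hi
      rw [Finset.mem_filter] at hi
      simp [hcut, hi.2]
    have hsum_v : ∑ i ∈ Finset.univ.filter (fun i : Fin (n+m) => ¬ (i:ℕ) < n),
        |d i| ^ p = 2 ^ p * Cv := by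
      rw [hCv, Finset.mul_sum]
      apply Finset.sum_congr rfl
      intro i hi
      rw [Finset.mem_filter] at hi
      have hdvi : ((1/2:ℝ) • dv) i = (1/2) * d i := by
        simp only [Pi.smul_apply, smul_eq_mul, hdv, vcut, if_neg hi.2]
      have habs : |(1/2 : ℝ) * d i| = |d i| / 2 := by
        rw [abs_mul, abs_of_pos (by norm_num : (0:ℝ) < 1/2)]
        ring
      rw [hdvi, habs, ← Real.mul_rpow (by norm_num) (by positivity)]
      congr 1
      ring
    have hd_pow : (np p d) ^ p = δ ^ p + 2 ^ p * Cv := by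
      rw [np_split hp d, ← hsum_h, hsum_v]
    have hnp2 : (np p d) ^ p < 2 ^ p := Real.rpow_lt_rpow (np_nonneg hp d) hlt hp0'
    have h2r : δ ^ p < (2*r) ^ p := by
      rw [Real.mul_rpow (by norm_num) (le_of_lt hr_pos), hr_pow]
      nlinarith [hd_pow, hnp2]
    have hδ2r : δ < 2*r := lt_of_rpow_lt hp (np_nonneg hp dh) (by positivity) h2r
    obtain ⟨u, hu_cont, hu_horiz, hu_np, hu0, hu1⟩ := path_lemma hn hp hdh0 (hcut_horiz d)
    set g : ℝ → ℝ := fun t => np p (dh - r • u t) with hg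
    have hg_cont : Continuous g :=
      (np_continuous hp).comp (continuous_const.sub (hu_cont.const_smul r))
    have hg0 : g 0 < r := by
      have e : dh - r • u 0 = (1 - r * δ⁻¹) • dh := by
        rw [hu0, ← hδdef]; module
      rw [hg]
      show np p (dh - r • u 0) < r
      rw [e, np_smul hp, ← hδdef]
      have habsmul : |1 - r * δ⁻¹| * δ = |δ - r| := by
        have h1 : (1 - r * δ⁻¹) * δ = δ - r := by field_simp
        calc |1 - r * δ⁻¹| * δ = |1 - r * δ⁻¹| * |δ| := by rw [abs_of_pos hδpos]
          _ = |(1 - r * δ⁻¹) * δ| := (abs_mul _ _).symm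
          _ = |δ - r| := by rw [h1]
      rw [habsmul, abs_sub_lt_iff]
      constructor <;> [linarith; linarith [hδpos]]
    have hg1 : r < g 1 := by
      have e : dh - r • u 1 = (1 + r * δ⁻¹) • dh := by
        rw [hu1, ← hδdef]; module
      rw [hg]
      show r < np p (dh - r • u 1)
      rw [e, np_smul hp, ← hδdef]
      have hpos : (0:ℝ) < 1 + r * δ⁻¹ := by positivity
      rw [abs_of_pos hpos]
      have : (1 + r * δ⁻¹) * δ = δ + r := by field_simp
      rw [this]
      linarith
    obtain ⟨ts, htsmem, hts⟩ : ∃ t ∈ Set.Icc (0:ℝ) 1, g t = r := by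
      have hIVT := intermediate_value_Icc (by norm_num : (0:ℝ) ≤ 1) hg_cont.continuousOn
      have hr_mem : r ∈ Set.Icc (g 0) (g 1) := ⟨le_of_lt hg0, le_of_lt hg1⟩
      obtain ⟨t, ht, hgt⟩ := hIVT hr_mem
      exact ⟨t, ht, hgt⟩
    set w : Fin (n+m) → ℝ := r • u ts - (1/2:ℝ) • dh with hw
    have hw_horiz : Horiz n m w := by
      intro i hi
      rw [hw]
      simp [hu_horiz ts i hi, hcut_horiz d i hi, hdh]
    have hw_horiz' : Horiz n m (dh - r • u ts) := by
      intro i hi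
      simp [hu_horiz ts i hi, hcut_horiz d i hi, hdh]
    have hnp_ru : np p (r • u ts) = r := by
      rw [np_smul hp, hu_np, mul_one, abs_of_pos hr_pos]
    refine ⟨M + w, M - w, mem_layer_add_horiz hM_mem hw_horiz, ?_, ?_, ?_, ?_, ?_, ?_⟩
    · rw [sub_eq_add_neg]
      exact mem_layer_add_horiz hM_mem hw_horiz.neg
    · intro h
      have hw0 : w = 0 := by
        have h2 : w + w = 0 := by
          have := sub_eq_zero.2 h
          have e : M + w - (M - w) = w + w := by abel
          rw [e] at this
          exact this
        have h3 : (2:ℝ) • w = 0 := by rw [two_smul]; exact h2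
        rcases smul_eq_zero.1 h3 with h4 | h4
        · norm_num at h4
        · exact h4
      have : r • u ts = (1/2:ℝ) • dh := by
        have := sub_eq_zero.1 (by rw [← hw]; exact hw0)
        exact this
      have hnps : r = (1/2) * δ := by
        have := congrArg (np p) this
        rw [hnp_ru, np_smul hp, ← hδdef] at this
        rw [this]
        congr 1
        norm_num
      rw [hnps] at hδ2r
      linarith
    · have e1 : M + w - A = (r • u ts) + (1/2:ℝ) • dv := by
        rw [hM, hw, ← hdhv]; module
      rw [e1]
      exact hnp_one _ ((hu_horiz ts).smul r) hnp_ru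
    · have e2 : B - (M + w) = (dh - r • u ts) + (1/2:ℝ) • dv := by
        have hB : B = A + d := by rw [hdDef]; abel
        rw [hM, hw, hB, ← hdhv]; module
      rw [e2]
      exact hnp_one _ hw_horiz' hts
    · have e3 : M - w - A = (dh - r • u ts) + (1/2:ℝ) • dv := by
        rw [hM, hw, ← hdhv]; module
      rw [e3]
      exact hnp_one _ hw_horiz' hts
    · have e4 : B - (M - w) = (r • u ts) + (1/2:ℝ) • dv := by
        have hB : B = A + d := by rw [hdDef]; abel
        rw [hM, hw, hB, ← hdhv]; module
      rw [e4]
      exact hnp_one _ ((hu_horiz ts).smul r) hnp_ru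

end construct

section graphdefs

variable {V W : Type*} (g : SimpleGraph V) (g' : SimpleGraph W)

/-- Definable relation: distance-2 (unique common neighbor). -/
def D2 (a b : V) : Prop := a ≠ b ∧ ∃! w, g.Adj a w ∧ g.Adj w b

/-- Definable relation: exact distance `T` (straight unit chain). -/
def DistN (T : ℕ) (a b : V) : Prop :=
  ∃ c : ℕ → V, c 0 = a ∧ c T = b ∧ (∀ i, i + 1 ≤ T → g.Adj (c i) (c (i+1))) ∧
    (∀ i, i + 2 ≤ T → D2 g (c i) (c (i+2)))

/-- Definable relation: exact distance `k` in a horizontal direction (infinite straight ray). -/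
def RayN (k : ℕ) (a b : V) : Prop :=
  ∃ c : ℕ → V, c 0 = a ∧ c k = b ∧ (∀ i, g.Adj (c i) (c (i+1))) ∧
    (∀ i, D2 g (c i) (c (i+2)))

/-- Definable relation characterizing a common vertical fiber. -/
def Phi (x y : V) : Prop :=
  ∀ k z z', 1 ≤ k → RayN g k x z → RayN g k x z' → (DistN g k z y ↔ DistN g k z' y)

variable {g g'}

lemma D2.map (f : g ≃g g') {a b : V} (h : D2 g a b) : D2 g' (f a) (f b) := by
  obtain ⟨hne, w, ⟨h1, h2⟩, huniq⟩ := h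
  refine ⟨fun he => hne (f.toEquiv.injective he), f w,
    ⟨(f.map_adj_iff).2 h1, (f.map_adj_iff).2 h2⟩, ?_⟩
  intro w' hw'
  have h1' : g.Adj a (f.symm w') := by
    have h := (f.symm.map_adj_iff).2 hw'.1
    simpa using h
  have h2' : g.Adj (f.symm w') b := by
    have h := (f.symm.map_adj_iff).2 hw'.2
    simpa using h
  have := huniq (f.symm w') ⟨h1', h2'⟩
  have := congrArg f this
  simpa using this

lemma DistN.map (f : g ≃g g') {T : ℕ} {a b : V} (h : DistN g T a b) :
    DistN g' T (f a) (f b) := by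
  obtain ⟨c, hc0, hcT, hadj, hd2⟩ := h
  refine ⟨fun i => f (c i), by show f (c 0) = f a; rw [hc0], by show f (c T) = f b; rw [hcT], ?_, ?_⟩
  · intro i hi
    exact (f.map_adj_iff).2 (hadj i hi)
  · intro i hi
    exact (hd2 i hi).map f

lemma RayN.map (f : g ≃g g') {k : ℕ} {a b : V} (h : RayN g k a b) :
    RayN g' k (f a) (f b) := by
  obtain ⟨c, hc0, hck, hadj, hd2⟩ := h
  refine ⟨fun i => f (c i), by show f (c 0) = f a; rw [hc0], by show f (c k) = f b; rw [hck], ?_, ?_⟩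
  · intro i
    exact (f.map_adj_iff).2 (hadj i)
  · intro i
    exact (hd2 i).map f

lemma distN_map_iff (f : g ≃g g') {T : ℕ} {a b : V} :
    DistN g' T (f a) (f b) ↔ DistN g T a b := by
  constructor
  · intro h
    have := h.map f.symm
    simpa using this
  · exact fun h => h.map f

lemma rayN_map_iff (f : g ≃g g') {k : ℕ} {a b : V} :
    RayN g' k (f a) (f b) ↔ RayN g k a b := by
  constructor
  · intro h
    have := h.map f.symm
    simpa using this
  · exact fun h => h.map f

lemma Phi.map (f : g ≃g g') {x y : V} (h : Phi g x y) : Phi g' (f x) (f y) := by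
  intro k z z' hk hr1 hr2
  have hr1' : RayN g k x (f.symm z) := by
    have : RayN g' k (f x) (f (f.symm z)) := by simpa using hr1
    exact (rayN_map_iff f).1 this
  have hr2' : RayN g k x (f.symm z') := by
    have : RayN g' k (f x) (f (f.symm z')) := by simpa using hr2
    exact (rayN_map_iff f).1 this
  have hiff := h k (f.symm z) (f.symm z') hk hr1' hr2'
  have e1 : DistN g' k z (f y) ↔ DistN g k (f.symm z) y := by
    have : DistN g' k (f (f.symm z)) (f y) ↔ DistN g k (f.symm z) y := distN_map_iff f
    simpa using this
  have e2 : DistN g' k z' (f y) ↔ DistN g k (f.symm z') y := by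
    have : DistN g' k (f (f.symm z')) (f y) ↔ DistN g k (f.symm z') y := distN_map_iff f
    simpa using this
  rw [e1, e2]
  exact hiff

end graphdefs

section bridge

variable {n m : ℕ}

lemma lpDist_eq {p : ℝ} (x y : Fin (n+m) → ℝ) : lpDist p x y = np p (x - y) := rfl

lemma adj_iff {p ε : ℝ} (hp : 1 < p) {a b : Layer n m ε} :
    (layerGraph n m p ε).Adj a b ↔ np p (a.1 - b.1) = 1 := by
  constructor
  · intro h
    have := (show a ≠ b ∧ lpDist p a.1 b.1 = 1 from h).2
    rwa [lpDist_eq] at this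
  · intro h
    refine (show a ≠ b ∧ lpDist p a.1 b.1 = 1 from ⟨?_, by rwa [lpDist_eq]⟩)
    intro he
    rw [he, sub_self] at h
    rw [np_zero hp] at h
    norm_num at h

lemma ne_of_np_pos {p ε : ℝ} (hp : 1 < p) {a b : Layer n m ε} {r : ℝ}
    (hr : 0 < r) (h : np p (a.1 - b.1) = r) : a ≠ b := by
  intro he
  rw [he, sub_self, np_zero hp] at h
  exact absurd h.symm (ne_of_gt hr)

lemma d2_iff (hn : 2 ≤ n) {p ε : ℝ} (hp : 1 < p) {a b : Layer n m ε} :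
    D2 (layerGraph n m p ε) a b ↔ np p (a.1 - b.1) = 2 := by
  constructor
  · rintro ⟨hne, w, ⟨h1, h2⟩, huniq⟩
    have h1' : np p (a.1 - w.1) = 1 := (adj_iff hp).1 h1
    have h2' : np p (w.1 - b.1) = 1 := (adj_iff hp).1 h2
    have hle : np p (a.1 - b.1) ≤ 2 := by
      have := np_add_le hp h1' h2'
      rwa [show a.1 - w.1 + (w.1 - b.1) = a.1 - b.1 by abel] at this
    rcases lt_or_eq_of_le hle with hlt | he
    · exfalso
      have hne' : a.1 ≠ b.1 := fun he' => hne (Subtype.ext he')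
      have hlt' : np p (a.1 - b.1) < 2 := hlt
      have hlt'' : np p (a.1 - b.1) < 2 := hlt'
      -- apply second_neighbor with A := b.1, B := a.1  (so that B - A = a.1 - b.1)
      obtain ⟨w₁, w₂, hw₁m, hw₂m, hww, e1, e2, e3, e4⟩ :=
        second_neighbor hn hp b.2 a.2 (fun hh => hne' (by rw [hh])) 
          (by rwa [show a.1 - b.1 = a.1 - b.1 from rfl] at hlt'')
      -- e1 : np (w₁ - b.1) = 1, e2 : np (a.1 - w₁) = 1, etc.
      have hadj1 : (layerGraph n m p ε).Adj a ⟨w₁, hw₁m⟩ := (adj_iff hp).2 e2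
      have hadj2 : (layerGraph n m p ε).Adj ⟨w₁, hw₁m⟩ b := (adj_iff hp).2 e1
      have hadj3 : (layerGraph n m p ε).Adj a ⟨w₂, hw₂m⟩ := (adj_iff hp).2 e4
      have hadj4 : (layerGraph n m p ε).Adj ⟨w₂, hw₂m⟩ b := (adj_iff hp).2 e3
      have u1 := huniq ⟨w₁, hw₁m⟩ ⟨hadj1, hadj2⟩
      have u2 := huniq ⟨w₂, hw₂m⟩ ⟨hadj3, hadj4⟩
      apply hww
      rw [Subtype.ext_iff] at u1 u2
      rw [show w₁ = (⟨w₁, hw₁m⟩ : Layer n m ε).1 from rfl, u1, ← u2]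
    · exact he
  · intro h
    have hne : a ≠ b := ne_of_np_pos hp (by norm_num) h
    set W : Fin (n+m) → ℝ := a.1 + (1/2 : ℝ) • (b.1 - a.1) with hW
    have hWm : W ∈ Layer n m ε := mem_layer_comb a.2 b.2 (by norm_num) (by norm_num)
    have hWa : np p (a.1 - W) = 1 := by
      rw [hW, show a.1 - (a.1 + (1/2:ℝ) • (b.1 - a.1)) = (-(1/2) : ℝ) • (b.1 - a.1) by module,
        np_smul hp, np_sub_rev hp, h, abs_neg, abs_of_pos (by norm_num : (0:ℝ) < 1/2)]
      norm_num
    have hWb : np p (W - b.1) = 1 := by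
      rw [hW, show a.1 + (1/2:ℝ) • (b.1 - a.1) - b.1 = (-(1/2) : ℝ) • (b.1 - a.1) by module,
        np_smul hp, np_sub_rev hp, h, abs_neg, abs_of_pos (by norm_num : (0:ℝ) < 1/2)]
      norm_num
    refine ⟨hne, ⟨W, hWm⟩, ⟨(adj_iff hp).2 hWa, (adj_iff hp).2 hWb⟩, ?_⟩
    rintro ⟨w', hw'm⟩ ⟨ha1, ha2⟩
    have h1' : np p (w' - a.1) = 1 := by
      have := (adj_iff hp).1 ha1
      rwa [np_sub_rev hp] at this
    have h2' : np p (b.1 - w') = 1 := by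
      have := (adj_iff hp).1 ha2
      rwa [np_sub_rev hp] at this
    have hWa' : np p (W - a.1) = 1 := by rwa [np_sub_rev hp] at hWa
    have hWb' : np p (b.1 - W) = 1 := by rwa [np_sub_rev hp] at hWb
    have hba : np p (b.1 - a.1) = 2 := by rwa [np_sub_rev hp] at h
    exact Subtype.ext (midpoint_unique hp h1' h2' hba hWa' hWb')

end bridge

section chains

variable {n m : ℕ}

lemma chain_steps (hn : 2 ≤ n) {p ε : ℝ} (hp : 1 < p) {T : ℕ} {c : ℕ → Layer n m ε}
    (hadj : ∀ i, i + 1 ≤ T → (layerGraph n m p ε).Adj (c i) (c (i+1)))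
    (hd2 : ∀ i, i + 2 ≤ T → D2 (layerGraph n m p ε) (c i) (c (i+2))) :
    ∀ i, i + 1 ≤ T → (c (i+1)).1 - (c i).1 = (c 1).1 - (c 0).1 := by
  intro i
  induction i with
  | zero => intro _; rfl
  | succ k ih =>
    intro hk1
    have hk : k + 1 ≤ T := by omega
    have hk2 : k + 2 ≤ T := by omega
    have h1 : np p ((c (k+1)).1 - (c k).1) = 1 := by
      have := (adj_iff hp).1 (hadj k hk)
      rwa [np_sub_rev hp] at this
    have h2 : np p ((c (k+2)).1 - (c (k+1)).1) = 1 := by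
      have := (adj_iff hp).1 (hadj (k+1) (by omega))
      rwa [np_sub_rev hp] at this
    have h3 : np p ((c (k+2)).1 - (c k).1) = 2 := by
      have := (d2_iff hn hp).1 (hd2 k hk2)
      rwa [np_sub_rev hp] at this
    have hstep := step_eq hp h1 h2 h3
    have e : k + 1 + 1 = k + 2 := rfl
    rw [e, hstep]
    exact ih hk

lemma chain_tele {T : ℕ} {c : ℕ → Layer n m ε} {u : Fin (n+m) → ℝ}
    (hsteps : ∀ i, i + 1 ≤ T → (c (i+1)).1 - (c i).1 = u) :
    ∀ i, i ≤ T → (c i).1 = (c 0).1 + (i : ℝ) • u := by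
  intro i
  induction i with
  | zero => intro _; simp
  | succ k ih =>
    intro hk
    have h1 := hsteps k (by omega)
    have h2 := ih (by omega)
    have : (c (k+1)).1 = (c k).1 + u := by
      rw [← h1]; abel
    rw [this, h2]
    push_cast
    module

/-- A straight chain of length `T` exists iff the distance is exactly `T`. -/
lemma distN_iff (hn : 2 ≤ n) {p ε : ℝ} (hp : 1 < p) {T : ℕ} (hT : 1 ≤ T)
    {a b : Layer n m ε} :
    DistN (layerGraph n m p ε) T a b ↔ np p (b.1 - a.1) = (T : ℝ) := by
  constructor
  · rintro ⟨c, hc0, hcT, hadj, hd2⟩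
    have hsteps := chain_steps hn hp hadj hd2
    have htele := chain_tele hsteps T le_rfl
    have hu : np p ((c 1).1 - (c 0).1) = 1 := by
      have := (adj_iff hp).1 (hadj 0 (by omega))
      rwa [np_sub_rev hp] at this
    have e : b.1 - a.1 = (T:ℝ) • ((c 1).1 - (c 0).1) := by
      rw [← hc0, ← hcT, htele]
      abel
    rw [e, np_smul hp, hu, mul_one, abs_of_nonneg (by positivity : (0:ℝ) ≤ (T:ℝ))]
  · intro h
    have hT0 : (0:ℝ) < (T:ℝ) := by exact_mod_cast Nat.pos_of_ne_zero (by omega)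
    have hmem : ∀ i : ℕ, a.1 + ((((min i T : ℕ)):ℝ)/(T:ℝ)) • (b.1 - a.1) ∈ Layer n m ε := by
      intro i
      apply mem_layer_comb a.2 b.2
      · positivity
      · rw [div_le_one hT0]
        exact_mod_cast min_le_right i T
    set c : ℕ → Layer n m ε := fun i => ⟨_, hmem i⟩ with hc
    have hcval : ∀ i, (c i).1 = a.1 + ((((min i T : ℕ)):ℝ)/(T:ℝ)) • (b.1 - a.1) :=
      fun i => rfl
    have hdiff : ∀ i j : ℕ, i ≤ T → j ≤ T → (c j).1 - (c i).1
        = (((j:ℝ) - (i:ℝ))/(T:ℝ)) • (b.1 - a.1) := by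
      intro i j hi hj
      rw [hcval i, hcval j, min_eq_left hi, min_eq_left hj]
      rw [show a.1 + ((j:ℝ)/(T:ℝ)) • (b.1 - a.1) - (a.1 + ((i:ℝ)/(T:ℝ)) • (b.1 - a.1))
        = ((j:ℝ)/(T:ℝ) - (i:ℝ)/(T:ℝ)) • (b.1 - a.1) by module]
      congr 1
      field_simp
    have hnp : ∀ i j : ℕ, i ≤ T → j ≤ T → np p ((c j).1 - (c i).1)
        = |(j:ℝ) - (i:ℝ)| := by
      intro i j hi hj
      rw [hdiff i j hi hj, np_smul hp, h, abs_div, abs_of_pos hT0]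
      field_simp
    refine ⟨c, ?_, ?_, ?_, ?_⟩
    · apply Subtype.ext
      rw [hcval 0]
      simp
    · apply Subtype.ext
      rw [hcval T, min_self, div_self (ne_of_gt hT0), one_smul]
      abel
    · intro i hi
      apply (adj_iff hp).2
      rw [np_sub_rev hp, hnp i (i+1) (by omega) hi]
      push_cast
      rw [show ((i:ℝ) + 1 - (i:ℝ)) = 1 by ring, abs_one]
    · intro i hi
      apply (d2_iff hn hp).2
      rw [np_sub_rev hp, hnp i (i+2) (by omega) hi]
      push_cast
      rw [show ((i:ℝ) + 2 - (i:ℝ)) = 2 by ring]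
      norm_num

end chains

section rays

variable {n m : ℕ}

lemma rayN_iff (hn : 2 ≤ n) {p ε : ℝ} (hp : 1 < p) {k : ℕ} (hk : 1 ≤ k)
    {a b : Layer n m ε} :
    RayN (layerGraph n m p ε) k a b ↔
      Horiz n m (b.1 - a.1) ∧ np p (b.1 - a.1) = (k : ℝ) := by
  constructor
  · rintro ⟨c, hc0, hck, hadj, hd2⟩
    have hsteps : ∀ i, (c (i+1)).1 - (c i).1 = (c 1).1 - (c 0).1 := fun i =>
      chain_steps hn hp (T := i+2) (fun j _ => hadj j) (fun j _ => hd2 j) i (by omega)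
    set u := (c 1).1 - (c 0).1 with hu
    have htele : ∀ i, (c i).1 = (c 0).1 + (i:ℝ) • u := fun i =>
      chain_tele (T := i) (fun j _ => hsteps j) i le_rfl
    have hu_np : np p u = 1 := by
      have := (adj_iff hp).1 (hadj 0)
      rwa [np_sub_rev hp] at this
    have hu_horiz : Horiz n m u := by
      intro j hj
      by_contra hne
      rcases lt_trichotomy (u j) 0 with hneg | hzero | hpos
      · obtain ⟨i, hi⟩ := exists_nat_gt (((c 0).1 j) / (-(u j)))
        have hmem := (c i).2 j hj
        rw [htele i] at hmem
        simp only [Pi.add_apply, Pi.smul_apply, smul_eq_mul] at hmem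
        have hlt : (c 0).1 j + (i:ℝ) * u j < 0 := by
          have h2 : ((c 0).1 j) / (-(u j)) < (i:ℝ) := hi
          have h3 : (0:ℝ) < -(u j) := by linarith
          rw [div_lt_iff₀ h3] at h2
          nlinarith
        exact absurd hmem.1 (not_le.2 hlt)
      · exact hne hzero
      · obtain ⟨i, hi⟩ := exists_nat_gt (ε / u j)
        have hmem := (c i).2 j hj
        rw [htele i] at hmem
        simp only [Pi.add_apply, Pi.smul_apply, smul_eq_mul] at hmem
        have h0 := ((c 0).2 j hj).1
        have hgt : ε < (c 0).1 j + (i:ℝ) * u j := by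
          rw [div_lt_iff₀ hpos] at hi
          nlinarith
        exact absurd hmem.2 (not_le.2 hgt)
    have he : b.1 - a.1 = (k:ℝ) • u := by
      rw [← hc0, ← hck, htele k]
      abel
    constructor
    · rw [he]
      exact hu_horiz.smul _
    · rw [he, np_smul hp, hu_np, mul_one, abs_of_nonneg (by positivity : (0:ℝ) ≤ (k:ℝ))]
  · rintro ⟨hhoriz, hnp⟩
    have hk0 : (0:ℝ) < (k:ℝ) := by exact_mod_cast Nat.pos_of_ne_zero (by omega)
    set u : Fin (n+m) → ℝ := ((k:ℝ))⁻¹ • (b.1 - a.1) with hu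
    have hu_horiz : Horiz n m u := hhoriz.smul _
    have hu_np : np p u = 1 := by
      rw [hu, np_smul hp, hnp, abs_of_pos (inv_pos.2 hk0), inv_mul_cancel₀ (ne_of_gt hk0)]
    have hmem : ∀ i : ℕ, a.1 + (i:ℝ) • u ∈ Layer n m ε := fun i =>
      mem_layer_add_horiz a.2 (hu_horiz.smul _)
    set c : ℕ → Layer n m ε := fun i => ⟨_, hmem i⟩ with hcdef
    have hcval : ∀ i, (c i).1 = a.1 + (i:ℝ) • u := fun i => rfl
    have hdiffnp : ∀ i j : ℕ, np p ((c j).1 - (c i).1) = |(j:ℝ) - (i:ℝ)| := by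
      intro i j
      rw [hcval i, hcval j,
        show a.1 + (j:ℝ) • u - (a.1 + (i:ℝ) • u) = ((j:ℝ) - (i:ℝ)) • u by module,
        np_smul hp, hu_np, mul_one]
    refine ⟨c, ?_, ?_, ?_, ?_⟩
    · apply Subtype.ext
      rw [hcval 0]
      simp
    · apply Subtype.ext
      rw [hcval k, hu, smul_smul, mul_inv_cancel₀ (ne_of_gt hk0), one_smul]
      abel
    · intro i
      apply (adj_iff hp).2
      rw [np_sub_rev hp, hdiffnp i (i+1)]
      push_cast
      rw [show ((i:ℝ) + 1 - (i:ℝ)) = 1 by ring, abs_one]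
    · intro i
      apply (d2_iff hn hp).2
      rw [np_sub_rev hp, hdiffnp i (i+2)]
      push_cast
      rw [show ((i:ℝ) + 2 - (i:ℝ)) = 2 by ring]
      norm_num

end rays

section phi

variable {n m : ℕ}

/-- Direction A: points of a common vertical fiber satisfy the definable relation Φ. -/
lemma phi_of_sameVertical (hn : 2 ≤ n) {p ε : ℝ} (hp : 1 < p)
    {x y : Layer n m ε} (hv : SameVertical n m x.1 y.1) :
    Phi (layerGraph n m p ε) x y := by
  intro k z z' hk hr1 hr2
  obtain ⟨hh1, hn1⟩ := (rayN_iff hn hp hk).1 hr1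
  obtain ⟨hh2, hn2⟩ := (rayN_iff hn hp hk).1 hr2
  have hvert : ∀ i : Fin (n+m), (i:ℕ) < n → (y.1 - x.1) i = 0 := by
    intro i hi
    simp [hv i hi]
  have key : ∀ zz : Layer n m ε, Horiz n m (zz.1 - x.1) →
      (np p (y.1 - zz.1))^p = (np p (zz.1 - x.1))^p
        + ∑ i ∈ Finset.univ.filter (fun i : Fin (n+m) => ¬ (i:ℕ) < n), |(y.1 - x.1) i| ^ p := by
    intro zz hzz
    have e : y.1 - zz.1 = (-(zz.1 - x.1)) + (y.1 - x.1) := by abel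
    rw [e, np_pow_split' hp hzz.neg hvert, np_neg hp]
  have hsame : np p (y.1 - z.1) = np p (y.1 - z'.1) := by
    apply rpow_inj hp (np_nonneg hp _) (np_nonneg hp _)
    rw [key z hh1, key z' hh2, hn1, hn2]
  rw [distN_iff hn hp hk, distN_iff hn hp hk, hsame]

/-- Direction B: the definable relation Φ forces a common vertical fiber. -/
lemma sameVertical_of_phi (hn : 2 ≤ n) {p ε : ℝ} (hp : 1 < p)
    {x y : Layer n m ε} (hphi : Phi (layerGraph n m p ε) x y) :
    SameVertical n m x.1 y.1 := by
  by_contra hsv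
  rw [SameVertical] at hsv
  push_neg at hsv
  obtain ⟨i0, hi0lt, hne0⟩ := hsv
  set H := hcut n m (x.1 - y.1) with hH
  have hH_horiz : Horiz n m H := hcut_horiz _
  have hH0 : H ≠ 0 := by
    intro h
    have := congrFun h i0
    rw [hH] at this
    simp only [hcut, if_pos hi0lt, Pi.zero_apply, Pi.sub_apply] at this
    exact hne0 (by linarith)
  set η := np p H with hη
  have hηpos : 0 < η := np_pos hp hH0
  set Cv := ∑ i ∈ Finset.univ.filter (fun i : Fin (n+m) => ¬ (i:ℕ) < n),
      |(vcut n m (x.1 - y.1)) i| ^ p with hCv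
  have hCv_nonneg : 0 ≤ Cv :=
    Finset.sum_nonneg fun i _ => Real.rpow_nonneg (abs_nonneg _) _
  have key : ∀ w, Horiz n m w → (np p ((x.1 + w) - y.1))^p = (np p (w + H))^p + Cv := by
    intro w hw
    have e : (x.1 + w) - y.1 = (w + H) + vcut n m (x.1 - y.1) := by
      have hsum := hcut_add_vcut (x.1 - y.1)
      rw [hH, show (w + hcut n m (x.1-y.1)) + vcut n m (x.1-y.1)
        = w + (hcut n m (x.1-y.1) + vcut n m (x.1-y.1)) by abel, hsum]
      abel
    rw [e, np_pow_split' hp (hw.add hH_horiz) (vcut_vert _)]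
  -- choose k
  obtain ⟨k, hk1, hkη, hkey⟩ :
      ∃ k : ℕ, 1 ≤ k ∧ η < (k:ℝ) ∧ ((k:ℝ) - η)^p + Cv < (k:ℝ)^p := by
    have hp1 : (0:ℝ) < p - 1 := by linarith
    have hpη : (0:ℝ) < p * η := by positivity
    set R : ℝ := (Cv/(p*η) + 1) ^ (1/(p-1) : ℝ) with hR
    have hR_nonneg : 0 ≤ R := Real.rpow_nonneg (by positivity) _
    have hR_pow : R ^ (p-1) = Cv/(p*η) + 1 := by
      rw [hR, one_div, Real.rpow_inv_rpow (by positivity) (ne_of_gt hp1)]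
    obtain ⟨k, hk⟩ := exists_nat_gt (η + R + 1)
    have hkR : (k:ℝ) - η > R := by linarith
    have hkη' : (0:ℝ) < (k:ℝ) - η := by linarith
    refine ⟨k, ?_, by linarith, ?_⟩
    · by_contra hc
      push_neg at hc
      interval_cases k
      · simp at hk
        linarith
    · -- Bernoulli estimate
      have hstep1 : Cv/(p*η) < ((k:ℝ) - η) ^ (p-1) := by
        calc Cv/(p*η) < Cv/(p*η) + 1 := by linarith
          _ = R ^ (p-1) := hR_pow.symm
          _ ≤ ((k:ℝ) - η) ^ (p-1) :=
              Real.rpow_le_rpow hR_nonneg (le_of_lt hkR) (le_of_lt hp1)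
      have hstep1' : Cv < p * η * ((k:ℝ) - η) ^ (p-1) := by
        rw [div_lt_iff₀ hpη] at hstep1
        calc Cv < ((k:ℝ) - η) ^ (p-1) * (p * η) := hstep1
          _ = p * η * ((k:ℝ) - η) ^ (p-1) := by ring
      set s : ℝ := η / ((k:ℝ) - η) with hs
      have hs_nonneg : 0 ≤ s := by positivity
      have hbern : 1 + p * s ≤ (1 + s) ^ p :=
        one_add_mul_self_le_rpow_one_add (by linarith) (le_of_lt hp)
      have hmul : ((k:ℝ) - η) ^ p * (1 + s) ^ p = (k:ℝ) ^ p := by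
        rw [← Real.mul_rpow (le_of_lt hkη') (by positivity)]
        congr 1
        rw [hs]
        field_simp
        ring
      have hsplit : ((k:ℝ) - η) ^ p * s = η * ((k:ℝ) - η) ^ (p-1) := by
        have : ((k:ℝ) - η) ^ p = ((k:ℝ) - η) ^ (p-1) * ((k:ℝ) - η) := by
          rw [← Real.rpow_add_one (ne_of_gt hkη')]
          congr 1
          ring
        rw [this, hs]
        field_simp
      have hfinal : ((k:ℝ) - η)^p + p * η * ((k:ℝ) - η) ^ (p-1) ≤ (k:ℝ)^p := by
        have h2 := mul_le_mul_of_nonneg_left hbern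
          (le_of_lt (Real.rpow_pos_of_pos hkη' p))
        rw [hmul] at h2
        calc ((k:ℝ) - η)^p + p * η * ((k:ℝ) - η) ^ (p-1)
            = ((k:ℝ) - η)^p * (1 + p * s) := by
              rw [mul_add, mul_one]
              congr 1
              rw [show ((k:ℝ)-η)^p * (p * s) = p * (((k:ℝ)-η)^p * s) by ring, hsplit]
              ring
          _ ≤ (k:ℝ)^p := h2
      linarith
  -- path and IVT
  obtain ⟨u, hu_cont, hu_horiz, hu_np, hu0, hu1⟩ := path_lemma hn hp hH0 hH_horiz
  have hzmem : ∀ t : ℝ, x.1 + (k:ℝ) • u t ∈ Layer n m ε := fun t =>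
    mem_layer_add_horiz x.2 ((hu_horiz t).smul _)
  set z : ℝ → Layer n m ε := fun t => ⟨_, hzmem t⟩ with hz
  have hk0 : (0:ℝ) < (k:ℝ) := by exact_mod_cast Nat.pos_of_ne_zero (by omega)
  have hray : ∀ t, RayN (layerGraph n m p ε) k x (z t) := by
    intro t
    apply (rayN_iff hn hp hk1).2
    constructor
    · rw [show (z t).1 - x.1 = (k:ℝ) • u t by rw [hz]; simp]
      exact (hu_horiz t).smul _
    · rw [show (z t).1 - x.1 = (k:ℝ) • u t by rw [hz]; simp]
      rw [np_smul hp, hu_np t, mul_one, abs_of_pos hk0]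
  set g : ℝ → ℝ := fun t => np p (y.1 - (z t).1) with hg
  have hgval : ∀ t, (g t) ^ p = (np p ((k:ℝ) • u t + H))^p + Cv := by
    intro t
    rw [hg]
    show (np p (y.1 - (z t).1)) ^ p = _
    rw [np_sub_rev hp]
    exact key ((k:ℝ) • u t) ((hu_horiz t).smul _)
  have hg_cont : Continuous g := by
    apply (np_continuous hp).comp
    apply Continuous.sub continuous_const
    show Continuous fun t => x.1 + (k:ℝ) • u t
    exact continuous_const.add (hu_cont.const_smul (k:ℝ))
  have hg0 : (k:ℝ) < g 0 := by
    apply lt_of_rpow_lt hp (le_of_lt hk0) ?_ ?_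
    · rw [hg]
      exact np_nonneg hp _
    · rw [hgval 0, hu0]
      have e : (k:ℝ) • ((np p H)⁻¹ • H) + H = ((k:ℝ) * η⁻¹ + 1) • H := by
        rw [← hη]; module
      rw [e, np_smul hp, ← hη]
      have hpos : (0:ℝ) < (k:ℝ) * η⁻¹ + 1 := by positivity
      rw [abs_of_pos hpos]
      have : ((k:ℝ) * η⁻¹ + 1) * η = (k:ℝ) + η := by field_simp
      rw [this]
      have h2 : (k:ℝ)^p < ((k:ℝ) + η)^p :=
        Real.rpow_lt_rpow (le_of_lt hk0) (by linarith) (hp0 hp)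
      linarith
  have hg1 : g 1 < (k:ℝ) := by
    apply lt_of_rpow_lt hp ?_ (le_of_lt hk0) ?_
    · rw [hg]
      exact np_nonneg hp _
    · rw [hgval 1, hu1]
      have e : (k:ℝ) • (-((np p H)⁻¹ • H)) + H = (1 - (k:ℝ) * η⁻¹) • H := by
        rw [← hη]; module
      rw [e, np_smul hp, ← hη]
      have habs : |1 - (k:ℝ) * η⁻¹| * η = (k:ℝ) - η := by
        have h1 : (1 - (k:ℝ) * η⁻¹) * η = η - (k:ℝ) := by field_simp
        calc |1 - (k:ℝ) * η⁻¹| * η = |1 - (k:ℝ) * η⁻¹| * |η| := by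
              rw [abs_of_pos hηpos]
          _ = |(1 - (k:ℝ) * η⁻¹) * η| := (abs_mul _ _).symm
          _ = |η - (k:ℝ)| := by rw [h1]
          _ = (k:ℝ) - η := by
              rw [abs_of_neg (by linarith : η - (k:ℝ) < 0)]
              ring
      rw [habs]
      exact hkey
  obtain ⟨ts, htsmem, hts⟩ : ∃ t ∈ Set.Icc (0:ℝ) 1, g t = (k:ℝ) := by
    have hIVT := intermediate_value_Icc' (by norm_num : (0:ℝ) ≤ 1) hg_cont.continuousOn
    have hmem' : (k:ℝ) ∈ Set.Icc (g 1) (g 0) := ⟨le_of_lt hg1, le_of_lt hg0⟩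
    obtain ⟨t, ht, hgt⟩ := hIVT hmem'
    exact ⟨t, ht, hgt⟩
  have hd1 : DistN (layerGraph n m p ε) k (z ts) y := by
    apply (distN_iff hn hp hk1).2
    exact hts
  have hd2 := (hphi k (z ts) (z 1) hk1 (hray ts) (hray 1)).1 hd1
  have := (distN_iff hn hp hk1).1 hd2
  rw [hg] at hg1
  exact absurd this (ne_of_lt hg1)

end phi

end LayerAux

/-- An isomorphism of the unit distance graphs of two layers maps points of a common
vertical fiber to points of a common vertical fiber. -/
theorem layer_iso_preserves_vertical_fiber (n m : ℕ) (hn : 2 ≤ n) (hm : 1 ≤ m)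
    (p : ℝ) (hp1 : 1 < p) (ε₁ ε₂ : ℝ) (hε₁ : 0 < ε₁) (hε₂ : 0 < ε₂)
    (f : layerGraph n m p ε₁ ≃g layerGraph n m p ε₂)
    (x₁ x₂ : Layer n m ε₁) (hv : SameVertical n m x₁.1 x₂.1) :
    SameVertical n m (f x₁).1 (f x₂).1 := by
  have h1 : LayerAux.Phi (layerGraph n m p ε₁) x₁ x₂ :=
    LayerAux.phi_of_sameVertical hn hp1 hv
  have h2 : LayerAux.Phi (layerGraph n m p ε₂) (f x₁) (f x₂) := h1.map f
  exact LayerAux.sameVertical_of_phi hn hp1 h2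
end
end

section
/- Let n ≥ 2 and ε > 0, and let L = ℝⁿ × [0,ε] with the Euclidean metric. Then every automorphism φ of the unit distance graph of L is an isometry of L: ||φ(x) - φ(y)|| = ||x - y|| for all x, y ∈ L. -/
noncomputable section

/-- The layer `ℝⁿ × [0,ε]` as a subset of Euclidean space `ℝ^{n+1}`: the last
coordinate lies in `[0,ε]`. -/
def LayerE (n : ℕ) (ε : ℝ) : Set (EuclideanSpace ℝ (Fin (n + 1))) :=
  {x | x (Fin.last n) ∈ Set.Icc 0 ε}

/-- The unit distance graph of the Euclidean layer `ℝⁿ × [0,ε]`. -/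
def layerGraphE (n : ℕ) (ε : ℝ) : SimpleGraph (LayerE n ε) where
  Adj x y := dist x.1 y.1 = 1
  symm := ⟨fun x y h => by simpa [dist_comm] using h⟩
  loopless := ⟨fun x h => by simp at h⟩

namespace BQAux

open Real Set

set_option maxHeartbeats 1000000

variable {n : ℕ} {ε : ℝ}

lemma eq_of_sq_eq {t b : ℝ} (ht : 0 ≤ t) (hb : 0 ≤ b) (h : t^2 = b^2) : t = b := by
  nlinarith [sq_nonneg (t - b), sq_nonneg (t + b)]

lemma norm_add_smul_sq (v e : EuclideanSpace ℝ (Fin (n+1))) (r : ℝ)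
    (h : inner ℝ v e = (0:ℝ)) :
    ‖v + r • e‖^2 = ‖v‖^2 + r^2 * ‖e‖^2 := by
  rw [norm_add_sq_real, real_inner_smul_right, h, mul_zero, norm_smul]
  simp [mul_pow, sq_abs]

lemma exists_unit_horiz_perp (hn : 2 ≤ n) (w : EuclideanSpace ℝ (Fin (n+1))) :
    ∃ e : EuclideanSpace ℝ (Fin (n+1)),
      ‖e‖ = 1 ∧ inner ℝ w e = (0:ℝ) ∧ e (Fin.last n) = 0 := by
  classical
  set f1 : EuclideanSpace ℝ (Fin (n+1)) →ₗ[ℝ] ℝ :=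
    (EuclideanSpace.proj (Fin.last n) : EuclideanSpace ℝ (Fin (n+1)) →L[ℝ] ℝ).toLinearMap with hf1
  set f2 : EuclideanSpace ℝ (Fin (n+1)) →ₗ[ℝ] ℝ :=
    (innerSL ℝ w : EuclideanSpace ℝ (Fin (n+1)) →L[ℝ] ℝ).toLinearMap with hf2
  have hdim : Module.finrank ℝ (EuclideanSpace ℝ (Fin (n+1))) = n + 1 := finrank_euclideanSpace_fin
  have hker : ∀ f : EuclideanSpace ℝ (Fin (n+1)) →ₗ[ℝ] ℝ,
      n ≤ Module.finrank ℝ (LinearMap.ker f) := by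
    intro f
    have h1 := LinearMap.finrank_range_add_finrank_ker f
    have h2 : Module.finrank ℝ (LinearMap.range f) ≤ 1 := by
      simpa using (LinearMap.range f).finrank_le
    omega
  have hsup : Module.finrank ℝ
      ((LinearMap.ker f1 ⊔ LinearMap.ker f2 : Submodule ℝ (EuclideanSpace ℝ (Fin (n+1))))) ≤ n + 1 := by
    simpa [hdim] using (LinearMap.ker f1 ⊔ LinearMap.ker f2).finrank_le
  have heq := Submodule.finrank_sup_add_finrank_inf_eq (LinearMap.ker f1) (LinearMap.ker f2)
  have hpos : 0 < Module.finrank ℝ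
      ((LinearMap.ker f1 ⊓ LinearMap.ker f2 : Submodule ℝ (EuclideanSpace ℝ (Fin (n+1))))) := by
    have g1 := hker f1; have g2 := hker f2; omega
  have : Nontrivial ((LinearMap.ker f1 ⊓ LinearMap.ker f2 : Submodule ℝ (EuclideanSpace ℝ (Fin (n+1))))) := by
    exact Module.nontrivial_of_finrank_pos hpos
  obtain ⟨v, hv⟩ := exists_ne (0 : (LinearMap.ker f1 ⊓ LinearMap.ker f2 : Submodule ℝ (EuclideanSpace ℝ (Fin (n+1)))))
  have hv1 : (v : EuclideanSpace ℝ (Fin (n+1))) ≠ 0 := by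
    exact fun h => hv (ZeroMemClass.coe_eq_zero.mp h)
  have hvn : ‖(v : EuclideanSpace ℝ (Fin (n+1)))‖ ≠ 0 := norm_ne_zero_iff.mpr hv1
  have hmem := v.2
  rw [Submodule.mem_inf] at hmem
  refine ⟨‖(v : EuclideanSpace ℝ (Fin (n+1)))‖⁻¹ • (v : EuclideanSpace ℝ (Fin (n+1))), ?_, ?_, ?_⟩
  · rw [norm_smul]; simp [hvn]
  · rw [real_inner_smul_right]
    have : inner ℝ w (v : EuclideanSpace ℝ (Fin (n+1))) = (0:ℝ) := by
      have := hmem.2; simpa [hf2, LinearMap.mem_ker] using this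
    rw [this, mul_zero]
  · have : (v : EuclideanSpace ℝ (Fin (n+1))) (Fin.last n) = 0 := by
      have := hmem.1; simpa [hf1, LinearMap.mem_ker] using this
    simp [PiLp.smul_apply, this]


lemma mem_layer_add_smul {y e : EuclideanSpace ℝ (Fin (n+1))} (hy : y ∈ LayerE n ε)
    (he : e (Fin.last n) = 0) (r : ℝ) : y + r • e ∈ LayerE n ε := by
  simpa [LayerE, PiLp.add_apply, PiLp.smul_apply, he] using hy

lemma mem_layer_segment {x y : EuclideanSpace ℝ (Fin (n+1))} (hx : x ∈ LayerE n ε)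
    (hy : y ∈ LayerE n ε) {θ : ℝ} (h0 : 0 ≤ θ) (h1 : θ ≤ 1) :
    x + θ • (y - x) ∈ LayerE n ε := by
  simp only [LayerE, Set.mem_setOf_eq, PiLp.add_apply, PiLp.smul_apply, PiLp.sub_apply,
    smul_eq_mul, Set.mem_Icc] at hx hy ⊢
  constructor <;> nlinarith [hx.1, hx.2, hy.1, hy.2]

/-- distance from `x` and `y` to the point `x + θ•(y-x) + r•e`. -/
lemma dist_comb {x y e : EuclideanSpace ℝ (Fin (n+1))} (he1 : ‖e‖ = 1)
    (he2 : inner ℝ (y - x) e = (0:ℝ)) (θ r : ℝ) :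
    dist x (x + θ • (y - x) + r • e) ^ 2 = θ^2 * (dist x y)^2 + r^2 ∧
    dist y (x + θ • (y - x) + r • e) ^ 2 = (1-θ)^2 * (dist x y)^2 + r^2 := by
  have hperp : ∀ s : ℝ, inner ℝ (s • (y - x)) e = (0:ℝ) := by
    intro s; rw [real_inner_smul_left, he2, mul_zero]
  have hxy : ‖y - x‖ = dist x y := by rw [dist_eq_norm']
  constructor
  · have h1 : x - (x + θ • (y - x) + r • e) = (-θ) • (y - x) + (-r) • e := by module
    rw [dist_eq_norm, h1, norm_add_smul_sq _ _ _ (hperp _), norm_smul]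
    simp [he1, hxy, mul_pow, sq_abs]
  · have h1 : y - (x + θ • (y - x) + r • e) = (1-θ) • (y - x) + (-r) • e := by module
    rw [dist_eq_norm, h1, norm_add_smul_sq _ _ _ (hperp _), norm_smul]
    simp [he1, hxy, mul_pow, sq_abs]

lemma exists_common (hn : 2 ≤ n) {x y : EuclideanSpace ℝ (Fin (n+1))}
    (hx : x ∈ LayerE n ε) (hy : y ∈ LayerE n ε)
    {a : ℝ} (ha : 0 < a) (h : dist x y ≤ 2*a) :
    ∃ z, z ∈ LayerE n ε ∧ dist x z = a ∧ dist y z = a := by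
  obtain ⟨e, he1, he2, he3⟩ := exists_unit_horiz_perp hn (y - x)
  have hd0 : 0 ≤ dist x y := dist_nonneg
  set r := Real.sqrt (a^2 - (dist x y)^2/4) with hr
  have hr2 : r^2 = a^2 - (dist x y)^2/4 := Real.sq_sqrt (by nlinarith)
  obtain ⟨h1, h2⟩ := dist_comb (x := x) (y := y) he1 he2 (1/2) r
  refine ⟨x + (1/2:ℝ) • (y - x) + r • e,
    mem_layer_add_smul (mem_layer_segment hx hy (by norm_num) (by norm_num)) he3 r, ?_, ?_⟩
  · exact eq_of_sq_eq dist_nonneg ha.le (by rw [h1]; nlinarith)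
  · exact eq_of_sq_eq dist_nonneg ha.le (by rw [h2]; nlinarith)

lemma scalar_facts {a b d : ℝ} (ha : 0 < a) (hb : 0 < b) (hd0 : 0 < d)
    (h1 : d < a + b) (h2 : |a^2 - b^2| < d^2) :
    0 ≤ (d^2+a^2-b^2)/(2*d^2) ∧ (d^2+a^2-b^2)/(2*d^2) ≤ 1 ∧
      0 < a^2 - ((d^2+a^2-b^2)/(2*d^2))^2*d^2 := by
  have habs1 : a^2 - b^2 < d^2 := by rcases abs_cases (a^2-b^2) with ⟨h,_⟩|⟨h,_⟩ <;> nlinarith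
  have habs2 : b^2 - a^2 < d^2 := by rcases abs_cases (a^2-b^2) with ⟨h,_⟩|⟨h,_⟩ <;> nlinarith
  have hsq : (a-b)^2 ≤ |a^2 - b^2| := by
    rcases abs_cases (a^2-b^2) with ⟨h,h'⟩ | ⟨h,h'⟩ <;> rw [h] <;> nlinarith
  have hfac1 : 0 < (a+b)^2 - d^2 := by nlinarith
  have hfac2 : 0 < d^2 - (a-b)^2 := by nlinarith
  have key : (d^2 + a^2 - b^2)^2 < 4*a^2*d^2 := by nlinarith [mul_pos hfac1 hfac2]
  have hd2 : (0:ℝ) < d^2 := by positivity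
  refine ⟨div_nonneg (by nlinarith) (by positivity), ?_, ?_⟩
  · rw [div_le_one (by positivity)]; nlinarith
  · have hexp : ((d^2+a^2-b^2)/(2*d^2))^2*d^2 = (d^2+a^2-b^2)^2/(4*d^2) := by
      field_simp; ring
    rw [hexp]
    have h6 : (d^2+a^2-b^2)^2/(4*d^2) < a^2 := by
      rw [div_lt_iff₀ (by positivity)]; nlinarith
    linarith

lemma theta_eq {a b d : ℝ} (hd0 : 0 < d) :
    ((d^2+a^2-b^2)/(2*d^2)) * (2*d^2) = d^2+a^2-b^2 := by
  field_simp

lemma exists_two_common (hn : 2 ≤ n) {x y : EuclideanSpace ℝ (Fin (n+1))}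
    (hx : x ∈ LayerE n ε) (hy : y ∈ LayerE n ε)
    {a b : ℝ} (ha : 0 < a) (hb : 0 < b)
    (h1 : dist x y < a + b) (h2 : |a^2 - b^2| < (dist x y)^2) :
    ∃ z w, z ∈ LayerE n ε ∧ w ∈ LayerE n ε ∧ z ≠ w ∧
      dist x z = a ∧ dist y z = b ∧ dist x w = a ∧ dist y w = b := by
  obtain ⟨e, he1, he2, he3⟩ := exists_unit_horiz_perp hn (y - x)
  have hd0 : 0 < dist x y := by
    rcases abs_cases (a^2-b^2) with ⟨h,_⟩ | ⟨h,_⟩ <;>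
      nlinarith [dist_nonneg (x := x) (y := y)]
  obtain ⟨hθ0, hθ1, hrpos⟩ := scalar_facts ha hb hd0 h1 h2
  have hθd := theta_eq (a := a) (b := b) (d := dist x y) hd0
  set θ := ((dist x y)^2+a^2-b^2)/(2*(dist x y)^2) with hθdef
  set r := Real.sqrt (a^2 - θ^2*(dist x y)^2) with hr
  have hr0 : 0 < r := Real.sqrt_pos.mpr hrpos
  have hr2 : r^2 = a^2 - θ^2*(dist x y)^2 := Real.sq_sqrt hrpos.le
  obtain ⟨hz1, hz2⟩ := dist_comb (x := x) (y := y) he1 he2 θ r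
  obtain ⟨hw1, hw2⟩ := dist_comb (x := x) (y := y) he1 he2 θ (-r)
  have hmem : x + θ • (y - x) ∈ LayerE n ε := mem_layer_segment hx hy hθ0 hθ1
  refine ⟨x + θ • (y - x) + r • e, x + θ • (y - x) + (-r) • e,
    mem_layer_add_smul hmem he3 r, mem_layer_add_smul hmem he3 (-r), ?_, ?_, ?_, ?_, ?_⟩
  · intro hzw
    have h4 : (2*r) • e = 0 := by
      have h5 : (x + θ • (y - x) + r • e) - (x + θ • (y - x) + (-r) • e) = (2*r) • e := by
        module
      rw [hzw] at h5; rw [← h5]; abel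
    rcases smul_eq_zero.mp h4 with h5 | h5
    · nlinarith
    · rw [h5] at he1; simp at he1
  · refine eq_of_sq_eq dist_nonneg ha.le ?_
    rw [hz1, hr2]; ring
  · refine eq_of_sq_eq dist_nonneg hb.le ?_
    rw [hz2, hr2]; linear_combination -hθd
  · refine eq_of_sq_eq dist_nonneg ha.le ?_
    rw [hw1, neg_sq, hr2]; ring
  · refine eq_of_sq_eq dist_nonneg hb.le ?_
    rw [hw2, neg_sq, hr2]; linear_combination -hθd

lemma dist_add_smul {x e : EuclideanSpace ℝ (Fin (n+1))} (he1 : ‖e‖ = 1) (r : ℝ) :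
    dist x (x + r • e) = |r| := by
  have h : x - (x + r • e) = (-r) • e := by module
  rw [dist_eq_norm, h, norm_smul, he1]; simp

lemma exists_two_common_self (hn : 2 ≤ n) {x : EuclideanSpace ℝ (Fin (n+1))}
    (hx : x ∈ LayerE n ε) {a : ℝ} (ha : 0 < a) :
    ∃ z w, z ∈ LayerE n ε ∧ w ∈ LayerE n ε ∧ z ≠ w ∧ dist x z = a ∧ dist x w = a := by
  obtain ⟨e, he1, he2, he3⟩ := exists_unit_horiz_perp hn 0
  refine ⟨x + a • e, x + (-a) • e, mem_layer_add_smul hx he3 a, mem_layer_add_smul hx he3 (-a),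
    ?_, ?_, ?_⟩
  · intro hzw
    have h4 : (2*a) • e = 0 := by
      have h5 : (x + a • e) - (x + (-a) • e) = (2*a) • e := by module
      rw [hzw] at h5; rw [← h5]; abel
    rcases smul_eq_zero.mp h4 with h5 | h5
    · nlinarith
    · rw [h5] at he1; simp at he1
  · rw [dist_add_smul he1, abs_of_pos ha]
  · rw [dist_add_smul he1, abs_of_neg (by linarith)]; ring

lemma eq_comb {x y z : EuclideanSpace ℝ (Fin (n+1))} {a b : ℝ} (ha : 0 < a) (hb : 0 < b)
    (hxy : dist x y = a + b) (hxz : dist x z = a) (hyz : dist y z = b) :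
    z = x + (a/(a+b)) • (y - x) := by
  have hu : ‖z - x‖ = a := by rw [norm_sub_rev, ← dist_eq_norm]; exact hxz
  have hv : ‖y - z‖ = b := by rw [← dist_eq_norm]; exact hyz
  have hsum : ‖(z - x) + (y - z)‖ = a + b := by
    have h : (z - x) + (y - z) = y - x := by abel
    rw [h, norm_sub_rev, ← dist_eq_norm]; exact hxy
  have hinner : inner ℝ (z - x) (y - z) = ‖z-x‖ * ‖y-z‖ := by
    have h7 := norm_add_sq_real (z - x) (y - z)
    rw [hsum, hu, hv] at h7
    rw [hu, hv]
    nlinarith [h7]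
  have heq := inner_eq_norm_mul_iff_real.mp hinner
  rw [hu, hv] at heq
  have hab : a + b ≠ 0 := by positivity
  have h3 : (a+b) • z = b • x + a • y := by
    linear_combination (norm := module) heq
  have h4 : z = ((a+b)⁻¹ * (a+b)) • z := by rw [inv_mul_cancel₀ hab, one_smul]
  rw [h4, ← smul_smul, h3]
  match_scalars <;> field_simp <;> ring


def Pres (φ : layerGraphE n ε ≃g layerGraphE n ε) (a : ℝ) : Prop :=
  ∀ x y : LayerE n ε, dist x.1 y.1 = a ↔ dist (φ x).1 (φ y).1 = a

variable (φ : layerGraphE n ε ≃g layerGraphE n ε)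

lemma pres_one : Pres φ 1 := by
  intro x y
  have h := φ.map_rel_iff (a := x) (b := y)
  simpa [layerGraphE] using h.symm

lemma transfer_exists {a b : ℝ} (ha : Pres φ a) (hb : Pres φ b) (x y : LayerE n ε) :
    (∃ z : LayerE n ε, dist x.1 z.1 = a ∧ dist y.1 z.1 = b) ↔
    (∃ z : LayerE n ε, dist (φ x).1 z.1 = a ∧ dist (φ y).1 z.1 = b) := by
  constructor
  · rintro ⟨z, h1, h2⟩; exact ⟨φ z, (ha x z).mp h1, (hb y z).mp h2⟩
  · rintro ⟨z, h1, h2⟩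
    refine ⟨φ.symm z, (ha x (φ.symm z)).mpr ?_, (hb y (φ.symm z)).mpr ?_⟩ <;>
      rwa [RelIso.apply_symm_apply]

lemma transfer_existsUnique {a b : ℝ} (ha : Pres φ a) (hb : Pres φ b) (x y : LayerE n ε) :
    (∃! z : LayerE n ε, dist x.1 z.1 = a ∧ dist y.1 z.1 = b) ↔
    (∃! z : LayerE n ε, dist (φ x).1 z.1 = a ∧ dist (φ y).1 z.1 = b) := by
  constructor
  · rintro ⟨z, ⟨h1, h2⟩, hu⟩
    refine ⟨φ z, ⟨(ha x z).mp h1, (hb y z).mp h2⟩, ?_⟩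
    rintro w ⟨g1, g2⟩
    have hw : φ.symm w = z := by
      apply hu
      constructor
      · exact (ha x (φ.symm w)).mpr (by rwa [RelIso.apply_symm_apply])
      · exact (hb y (φ.symm w)).mpr (by rwa [RelIso.apply_symm_apply])
    rw [← hw, RelIso.apply_symm_apply]
  · rintro ⟨z, ⟨h1, h2⟩, hu⟩
    refine ⟨φ.symm z, ⟨(ha x (φ.symm z)).mpr (by rwa [RelIso.apply_symm_apply]),
      (hb y (φ.symm z)).mpr (by rwa [RelIso.apply_symm_apply])⟩, ?_⟩
    rintro w ⟨g1, g2⟩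
    have hw : φ w = z := hu (φ w) ⟨(ha x w).mp g1, (hb y w).mp g2⟩
    rw [← hw, RelIso.symm_apply_apply]

lemma char_double (hn : 2 ≤ n) {a : ℝ} (ha : 0 < a) (x y : LayerE n ε) :
    dist x.1 y.1 = 2*a ↔ ∃! z : LayerE n ε, dist x.1 z.1 = a ∧ dist y.1 z.1 = a := by
  constructor
  · intro hd
    obtain ⟨z, hz, h1, h2⟩ := exists_common hn x.2 y.2 ha (le_of_eq hd)
    refine ⟨⟨z, hz⟩, ⟨h1, h2⟩, ?_⟩
    rintro ⟨w, hw⟩ ⟨g1, g2⟩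
    have e1 : w = x.1 + (a/(a+a)) • (y.1 - x.1) :=
      eq_comb ha ha (by rw [hd]; ring) g1 g2
    have e2 : z = x.1 + (a/(a+a)) • (y.1 - x.1) :=
      eq_comb ha ha (by rw [hd]; ring) h1 h2
    exact Subtype.ext (e1.trans e2.symm)
  · rintro ⟨z, ⟨h1, h2⟩, hu⟩
    have hle : dist x.1 y.1 ≤ 2*a := by
      have := dist_triangle x.1 z.1 y.1
      rw [h1, dist_comm z.1 y.1, h2] at this
      linarith
    rcases lt_or_eq_of_le hle with hlt | heq
    · exfalso
      by_cases hxy : x.1 = y.1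
      · obtain ⟨z1, w1, hz1, hw1, hne, d1, d2⟩ := exists_two_common_self hn x.2 ha
        have e1 := hu ⟨z1, hz1⟩ ⟨d1, by rw [← hxy]; exact d1⟩
        have e2 := hu ⟨w1, hw1⟩ ⟨d2, by rw [← hxy]; exact d2⟩
        exact hne ((Subtype.ext_iff.mp e1).trans (Subtype.ext_iff.mp e2).symm)
      · have hd0 : 0 < dist x.1 y.1 := dist_pos.mpr hxy
        have habs : |a^2 - a^2| < (dist x.1 y.1)^2 := by
          simp only [sub_self, abs_zero]; positivity
        obtain ⟨z1, w1, hz1, hw1, hne, d1, d2, d3, d4⟩ :=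
          exists_two_common hn x.2 y.2 ha ha (by linarith) habs
        have e1 := hu ⟨z1, hz1⟩ ⟨d1, d2⟩
        have e2 := hu ⟨w1, hw1⟩ ⟨d3, d4⟩
        exact hne ((Subtype.ext_iff.mp e1).trans (Subtype.ext_iff.mp e2).symm)
    · exact heq

lemma pres_double (hn : 2 ≤ n) {a : ℝ} (ha : 0 < a) (hp : Pres φ a) : Pres φ (2*a) := by
  intro x y
  rw [char_double hn ha x y, char_double hn ha (φ x) (φ y)]
  exact transfer_existsUnique φ hp hp x y

lemma pres_le (hn : 2 ≤ n) {a : ℝ} (ha : 0 < a) (hp : Pres φ a) (x y : LayerE n ε) :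
    dist x.1 y.1 ≤ 2*a ↔ dist (φ x).1 (φ y).1 ≤ 2*a := by
  have char : ∀ u v : LayerE n ε,
      (dist u.1 v.1 ≤ 2*a ↔ ∃ z : LayerE n ε, dist u.1 z.1 = a ∧ dist v.1 z.1 = a) := by
    intro u v
    constructor
    · intro h
      obtain ⟨z, hz, h1, h2⟩ := exists_common hn u.2 v.2 ha h
      exact ⟨⟨z, hz⟩, h1, h2⟩
    · rintro ⟨z, h1, h2⟩
      have := dist_triangle u.1 z.1 v.1
      rw [h1, dist_comm z.1 v.1, h2] at this
      linarith
  rw [char x y, char (φ x) (φ y)]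
  exact transfer_exists φ hp hp x y

lemma char_sum (hn : 2 ≤ n) {a b α : ℝ} (ha : 0 < a) (hb : 0 < b) (hα : 0 < α)
    (hlow : |a^2 - b^2| ≤ 4*α^2) (hup : 2*α < a + b) (x y : LayerE n ε) :
    dist x.1 y.1 = a + b ↔
      (¬ dist x.1 y.1 ≤ 2*α) ∧ ∃! z : LayerE n ε, dist x.1 z.1 = a ∧ dist y.1 z.1 = b := by
  constructor
  · intro hd
    refine ⟨by rw [hd]; linarith, ?_⟩
    obtain ⟨e, he1, he2, he3⟩ := exists_unit_horiz_perp hn (y.1 - x.1)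
    obtain ⟨hz1, hz2⟩ := dist_comb (x := x.1) (y := y.1) he1 he2 (a/(a+b)) 0
    have hab : 0 < a + b := by linarith
    have hmem : x.1 + (a/(a+b)) • (y.1 - x.1) + (0:ℝ) • e ∈ LayerE n ε :=
      mem_layer_add_smul (mem_layer_segment x.2 y.2 (by positivity)
        (by rw [div_le_one hab]; linarith)) he3 0
    refine ⟨⟨_, hmem⟩, ⟨?_, ?_⟩, ?_⟩
    · refine eq_of_sq_eq dist_nonneg ha.le ?_
      rw [hz1, hd]
      field_simp; ring
    · refine eq_of_sq_eq dist_nonneg hb.le ?_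
      rw [hz2, hd]
      field_simp; ring
    · rintro ⟨w, hw⟩ ⟨g1, g2⟩
      have e1 : w = x.1 + (a/(a+b)) • (y.1 - x.1) := eq_comb ha hb hd g1 g2
      refine Subtype.ext ?_
      show w = x.1 + (a/(a+b)) • (y.1 - x.1) + (0:ℝ) • e
      rw [e1]
      module
  · rintro ⟨hgt, z, ⟨h1, h2⟩, hu⟩
    push_neg at hgt
    have hle : dist x.1 y.1 ≤ a + b := by
      have := dist_triangle x.1 z.1 y.1
      rw [h1, dist_comm z.1 y.1, h2] at this
      linarith
    rcases lt_or_eq_of_le hle with hlt | heq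
    · exfalso
      have habs : |a^2 - b^2| < (dist x.1 y.1)^2 := by
        have h4 : (2*α)^2 < (dist x.1 y.1)^2 := by
          apply sq_lt_sq' <;> nlinarith
        nlinarith
      obtain ⟨z1, w1, hz1, hw1, hne, d1, d2, d3, d4⟩ :=
        exists_two_common hn x.2 y.2 ha hb hlt habs
      have e1 := hu ⟨z1, hz1⟩ ⟨d1, d2⟩
      have e2 := hu ⟨w1, hw1⟩ ⟨d3, d4⟩
      exact hne ((Subtype.ext_iff.mp e1).trans (Subtype.ext_iff.mp e2).symm)
    · exact heq

lemma pres_sum (hn : 2 ≤ n) {a b α : ℝ} (ha : 0 < a) (hb : 0 < b) (hα : 0 < α)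
    (hpa : Pres φ a) (hpb : Pres φ b) (hpα : Pres φ α)
    (hlow : |a^2 - b^2| ≤ 4*α^2) (hup : 2*α < a + b) : Pres φ (a+b) := by
  intro x y
  rw [char_sum hn ha hb hα hlow hup x y, char_sum hn ha hb hα hlow hup (φ x) (φ y)]
  exact and_congr (not_congr (pres_le φ hn hα hpα x y)) (transfer_existsUnique φ hpa hpb x y)

lemma char_sqrt (hn : 2 ≤ n) {b c : ℝ} (hc : 0 < c) (hcb : c < b) (x y : LayerE n ε) :
    dist x.1 y.1 = Real.sqrt (b^2 - c^2) ↔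
      ∃ u v : LayerE n ε, dist u.1 v.1 = 2*c ∧ dist y.1 u.1 = c ∧ dist y.1 v.1 = c ∧
        dist x.1 u.1 = b ∧ dist x.1 v.1 = b := by
  have hb : 0 < b := lt_trans hc hcb
  have hρ2 : (Real.sqrt (b^2 - c^2))^2 = b^2 - c^2 := Real.sq_sqrt (by nlinarith)
  constructor
  · intro hd
    obtain ⟨e, he1, he2, he3⟩ := exists_unit_horiz_perp hn (x.1 - y.1)
    have hperp : ∀ s : ℝ, inner ℝ (x.1 - y.1) (s • e) = (0:ℝ) := by
      intro s; rw [real_inner_smul_right, he2, mul_zero]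
    refine ⟨⟨y.1 + c • e, mem_layer_add_smul y.2 he3 c⟩,
      ⟨y.1 + (-c) • e, mem_layer_add_smul y.2 he3 (-c)⟩, ?_, ?_, ?_, ?_, ?_⟩
    · show dist (y.1 + c • e) (y.1 + (-c) • e) = 2*c
      have h5 : (y.1 + c • e) - (y.1 + (-c) • e) = (2*c) • e := by module
      rw [dist_eq_norm, h5, norm_smul, he1, mul_one]
      exact abs_of_pos (by linarith)
    · show dist y.1 (y.1 + c • e) = c
      rw [dist_add_smul he1, abs_of_pos hc]
    · show dist y.1 (y.1 + (-c) • e) = c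
      rw [dist_add_smul he1, abs_of_neg (by linarith : -c < 0)]
      ring
    · show dist x.1 (y.1 + c • e) = b
      refine eq_of_sq_eq dist_nonneg hb.le ?_
      have h5 : x.1 - (y.1 + c • e) = (x.1 - y.1) + (-c) • e := by module
      rw [dist_eq_norm, h5, norm_add_smul_sq _ _ _ (by rw [he2]), he1]
      have h6 : ‖x.1 - y.1‖ = dist x.1 y.1 := (dist_eq_norm _ _).symm
      rw [h6, hd, hρ2]
      ring
    · show dist x.1 (y.1 + (-c) • e) = b
      refine eq_of_sq_eq dist_nonneg hb.le ?_
      have h5 : x.1 - (y.1 + (-c) • e) = (x.1 - y.1) + c • e := by module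
      rw [dist_eq_norm, h5, norm_add_smul_sq _ _ _ (by rw [he2]), he1]
      have h6 : ‖x.1 - y.1‖ = dist x.1 y.1 := (dist_eq_norm _ _).symm
      rw [h6, hd, hρ2]
      ring
  · rintro ⟨u, v, huv, hyu, hyv, hxu, hxv⟩
    have hmid : y.1 = u.1 + (c/(c+c)) • (v.1 - u.1) :=
      eq_comb hc hc (by rw [huv]; ring) (by rw [dist_comm]; exact hyu)
        (by rw [dist_comm]; exact hyv)
    have hvy : v.1 - y.1 = -(u.1 - y.1) := by
      rw [hmid]
      have hcc : c/(c+c) = 1/2 := by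
        field_simp
        ring
      rw [hcc]
      module
    have hnw : ‖u.1 - y.1‖ = c := by rw [norm_sub_rev, ← dist_eq_norm]; exact hyu
    have hxu' : ‖(x.1 - y.1) - (u.1 - y.1)‖ = b := by
      have h5 : (x.1 - y.1) - (u.1 - y.1) = x.1 - u.1 := by abel
      rw [h5, ← dist_eq_norm]; exact hxu
    have hxv' : ‖(x.1 - y.1) + (u.1 - y.1)‖ = b := by
      have h5 : (x.1 - y.1) + (u.1 - y.1) = x.1 - v.1 := by
        rw [show u.1 - y.1 = -(v.1 - y.1) by rw [hvy, neg_neg]]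
        abel
      rw [h5, ← dist_eq_norm]; exact hxv
    have hpar1 := norm_add_sq_real (x.1 - y.1) (u.1 - y.1)
    have hpar2 := norm_sub_sq_real (x.1 - y.1) (u.1 - y.1)
    rw [hxv'] at hpar1
    rw [hxu'] at hpar2
    rw [hnw] at hpar1 hpar2
    have hsq : (dist x.1 y.1)^2 = b^2 - c^2 := by
      have h6 : ‖x.1 - y.1‖ = dist x.1 y.1 := (dist_eq_norm _ _).symm
      rw [h6] at hpar1 hpar2
      nlinarith
    rw [← hsq, Real.sqrt_sq dist_nonneg]

lemma pres_sqrt (hn : 2 ≤ n) {b c : ℝ} (hc : 0 < c) (hcb : c < b)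
    (hpb : Pres φ b) (hpc : Pres φ c) : Pres φ (Real.sqrt (b^2 - c^2)) := by
  have hp2c : Pres φ (2*c) := pres_double φ hn hc hpc
  intro x y
  rw [char_sqrt hn hc hcb x y, char_sqrt hn hc hcb (φ x) (φ y)]
  constructor
  · rintro ⟨u, v, h1, h2, h3, h4, h5⟩
    exact ⟨φ u, φ v, (hp2c u v).mp h1, (hpc y u).mp h2, (hpc y v).mp h3,
      (hpb x u).mp h4, (hpb x v).mp h5⟩
  · rintro ⟨u, v, h1, h2, h3, h4, h5⟩
    refine ⟨φ.symm u, φ.symm v,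
      (hp2c _ _).mpr (by rwa [RelIso.apply_symm_apply, RelIso.apply_symm_apply]),
      (hpc y _).mpr (by rwa [RelIso.apply_symm_apply]),
      (hpc y _).mpr (by rwa [RelIso.apply_symm_apply]),
      (hpb x _).mpr (by rwa [RelIso.apply_symm_apply]),
      (hpb x _).mpr (by rwa [RelIso.apply_symm_apply])⟩


section Arith

set_option linter.unusedSectionVars false

variable {P : ℝ → Prop}
  (p1 : P 1)
  (pdouble : ∀ a : ℝ, 0 < a → P a → P (2*a))
  (psum : ∀ a b α : ℝ, 0 < a → 0 < b → 0 < α → P a → P b → P α →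
    |a^2 - b^2| ≤ 4*α^2 → 2*α < a + b → P (a+b))
  (psqrt : ∀ b c : ℝ, 0 < c → c < b → P b → P c → P (Real.sqrt (b^2 - c^2)))

include p1 pdouble psum psqrt

lemma pres_basics :
    P (Real.sqrt (2*Real.sqrt 2 - 2)) ∧ P (Real.sqrt (3 - 2*Real.sqrt 2)) ∧
    (∀ t : ℕ, P ((2:ℝ)^t)) := by
  have s2sq : (Real.sqrt 2)^2 = 2 := Real.sq_sqrt (by norm_num)
  have s2nn : 0 ≤ Real.sqrt 2 := Real.sqrt_nonneg 2
  have s2gt1 : 1 < Real.sqrt 2 := by nlinarith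
  have s2lt : Real.sqrt 2 < 3/2 := by nlinarith
  set s := Real.sqrt 2 with hs
  have hs0 : 0 < s := by linarith
  have p2 : P 2 := by simpa using pdouble 1 one_pos p1
  have p3' := psqrt 2 1 one_pos one_lt_two p2 p1
  have e3 : (2:ℝ)^2 - 1^2 = 3 := by norm_num
  rw [e3] at p3'
  have sq3 : (Real.sqrt 3)^2 = 3 := Real.sq_sqrt (by norm_num)
  have sqrt3_pos : 0 < Real.sqrt 3 := Real.sqrt_pos.mpr (by norm_num)
  have sqrt3_gt1 : 1 < Real.sqrt 3 := by nlinarith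
  have ps2' := psqrt (Real.sqrt 3) 1 one_pos sqrt3_gt1 p3' p1
  have e2 : (Real.sqrt 3)^2 - 1^2 = 2 := by rw [sq3]; norm_num
  rw [e2] at ps2'
  have ps2 : P s := ps2'
  -- 1 + √2
  have p12 : P (1 + s) := by
    apply psum 1 s 1 one_pos hs0 one_pos p1 ps2 p1
    · have : |(1:ℝ)^2 - s^2| = 1 := by rw [s2sq]; norm_num
      rw [this]; norm_num
    · nlinarith
  -- c1 = √(2+2√2)
  have c1' := psqrt (1+s) 1 one_pos (by nlinarith) p12 p1
  have ec1 : (1+s)^2 - 1^2 = 2 + 2*s := by nlinarith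
  rw [ec1] at c1'
  have hc1pos : (0:ℝ) < 2 + 2*s := by nlinarith
  have hc1sq : (Real.sqrt (2+2*s))^2 = 2+2*s := Real.sq_sqrt hc1pos.le
  have hc1gt1 : 1 < Real.sqrt (2+2*s) := by
    nlinarith [Real.sqrt_nonneg (2+2*s)]
  -- c2 = √(1+2√2)
  have c2' := psqrt (Real.sqrt (2+2*s)) 1 one_pos hc1gt1 c1' p1
  have ec2 : (Real.sqrt (2+2*s))^2 - 1^2 = 1 + 2*s := by rw [hc1sq]; ring
  rw [ec2] at c2'
  have hc2pos : (0:ℝ) < 1 + 2*s := by nlinarith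
  have hc2sq : (Real.sqrt (1+2*s))^2 = 1+2*s := Real.sq_sqrt hc2pos.le
  have hc2gt1 : 1 < Real.sqrt (1+2*s) := by
    nlinarith [Real.sqrt_nonneg (1+2*s)]
  -- c3 = √(2√2)
  have c3' := psqrt (Real.sqrt (1+2*s)) 1 one_pos hc2gt1 c2' p1
  have ec3 : (Real.sqrt (1+2*s))^2 - 1^2 = 2*s := by rw [hc2sq]; ring
  rw [ec3] at c3'
  have hc3pos : (0:ℝ) < 2*s := by nlinarith
  have hc3sq : (Real.sqrt (2*s))^2 = 2*s := Real.sq_sqrt hc3pos.le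
  have hc3nn : 0 ≤ Real.sqrt (2*s) := Real.sqrt_nonneg _
  -- aS = √(2√2 - 2)
  have hslt : s < Real.sqrt (2*s) := by nlinarith
  have aS' := psqrt (Real.sqrt (2*s)) s hs0 hslt c3' ps2
  have eaS : (Real.sqrt (2*s))^2 - s^2 = 2*s - 2 := by rw [hc3sq, s2sq]
  rw [eaS] at aS'
  -- gam = √(3 - 2√2)
  have hc3lt : Real.sqrt (2*s) < Real.sqrt 3 := by nlinarith
  have gam' := psqrt (Real.sqrt 3) (Real.sqrt (2*s)) (by nlinarith) hc3lt p3' c3'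
  have egam : (Real.sqrt 3)^2 - (Real.sqrt (2*s))^2 = 3 - 2*s := by rw [sq3, hc3sq]
  rw [egam] at gam'
  refine ⟨aS', gam', ?_⟩
  intro t
  induction t with
  | zero => simpa using p1
  | succ t ih =>
      have := pdouble _ (by positivity) ih
      rw [← pow_succ'] at this
      exact this

lemma pres_family (t : ℕ) : ∀ j k : ℕ,
    0 < ((2:ℝ)^t)^2 - j*(2*Real.sqrt 2 - 2) - k*(3 - 2*Real.sqrt 2) →
    P (Real.sqrt (((2:ℝ)^t)^2 - j*(2*Real.sqrt 2 - 2) - k*(3 - 2*Real.sqrt 2))) := by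
  obtain ⟨paS, pgam, ppow⟩ := pres_basics p1 pdouble psum psqrt
  have s2sq : (Real.sqrt 2)^2 = 2 := Real.sq_sqrt (by norm_num)
  have s2nn : 0 ≤ Real.sqrt 2 := Real.sqrt_nonneg 2
  have s2gt1 : 1 < Real.sqrt 2 := by nlinarith
  have s2lt : Real.sqrt 2 < 3/2 := by nlinarith
  have hApos : 0 < 2*Real.sqrt 2 - 2 := by nlinarith
  have hGpos : 0 < 3 - 2*Real.sqrt 2 := by nlinarith
  have hAsq : (Real.sqrt (2*Real.sqrt 2 - 2))^2 = 2*Real.sqrt 2 - 2 := Real.sq_sqrt hApos.le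
  have hGsq : (Real.sqrt (3 - 2*Real.sqrt 2))^2 = 3 - 2*Real.sqrt 2 := Real.sq_sqrt hGpos.le
  intro j
  induction j with
  | zero =>
      intro k
      induction k with
      | zero =>
          intro _
          have he : ((2:ℝ)^t)^2 - (0:ℕ)*(2*Real.sqrt 2 - 2) - (0:ℕ)*(3 - 2*Real.sqrt 2)
              = ((2:ℝ)^t)^2 := by push_cast; ring
          rw [he, Real.sqrt_sq (by positivity)]
          exact ppow t
      | succ k ih =>
          intro hpos
          have hstep : ((2:ℝ)^t)^2 - (0:ℕ)*(2*Real.sqrt 2 - 2) - ((k+1:ℕ))*(3 - 2*Real.sqrt 2)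
              = (((2:ℝ)^t)^2 - (0:ℕ)*(2*Real.sqrt 2 - 2) - (k:ℕ)*(3 - 2*Real.sqrt 2))
                - (3 - 2*Real.sqrt 2) := by push_cast; ring
          rw [hstep] at hpos ⊢
          set prev := ((2:ℝ)^t)^2 - (0:ℕ)*(2*Real.sqrt 2 - 2) - (k:ℕ)*(3 - 2*Real.sqrt 2) with hprev
          have hprevpos : 0 < prev := by nlinarith
          have hP := ih hprevpos
          have hlt : Real.sqrt (3 - 2*Real.sqrt 2) < Real.sqrt prev := by
            apply Real.sqrt_lt_sqrt hGpos.le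
            nlinarith
          have := psqrt (Real.sqrt prev) (Real.sqrt (3 - 2*Real.sqrt 2))
            (Real.sqrt_pos.mpr hGpos) hlt hP pgam
          rwa [Real.sq_sqrt hprevpos.le, hGsq] at this
  | succ j ihj =>
      intro k hpos
      have hstep : ((2:ℝ)^t)^2 - ((j+1:ℕ))*(2*Real.sqrt 2 - 2) - (k:ℕ)*(3 - 2*Real.sqrt 2)
          = (((2:ℝ)^t)^2 - (j:ℕ)*(2*Real.sqrt 2 - 2) - (k:ℕ)*(3 - 2*Real.sqrt 2))
            - (2*Real.sqrt 2 - 2) := by push_cast; ring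
      rw [hstep] at hpos ⊢
      set prev := ((2:ℝ)^t)^2 - (j:ℕ)*(2*Real.sqrt 2 - 2) - (k:ℕ)*(3 - 2*Real.sqrt 2) with hprev
      have hprevpos : 0 < prev := by nlinarith
      have hP := ihj k hprevpos
      have hlt : Real.sqrt (2*Real.sqrt 2 - 2) < Real.sqrt prev := by
        apply Real.sqrt_lt_sqrt hApos.le
        nlinarith
      have := psqrt (Real.sqrt prev) (Real.sqrt (2*Real.sqrt 2 - 2))
        (Real.sqrt_pos.mpr hApos) hlt hP paS
      rwa [Real.sq_sqrt hprevpos.le, hAsq] at this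

lemma exists_P_between {u v : ℝ} (hu : 0 < u) (huv : u < v) :
    ∃ a : ℝ, P a ∧ 0 < a ∧ u < 2*a ∧ 2*a < v := by
  have s2sq : (Real.sqrt 2)^2 = 2 := Real.sq_sqrt (by norm_num)
  have s2nn : 0 ≤ Real.sqrt 2 := Real.sqrt_nonneg 2
  -- the subgroup ℤ + (2√2)ℤ is dense
  set G : AddSubgroup ℝ := AddSubgroup.closure {(1:ℝ), 2*Real.sqrt 2} with hG
  have hdense : Dense (G : Set ℝ) := by
    rcases AddSubgroup.dense_or_cyclic G with hd | ⟨g, hg⟩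
    · exact hd
    · exfalso
      have h1 : (1:ℝ) ∈ G := AddSubgroup.subset_closure (by simp)
      have h2 : 2*Real.sqrt 2 ∈ G := AddSubgroup.subset_closure (by simp)
      rw [hg, AddSubgroup.mem_closure_singleton] at h1 h2
      obtain ⟨m, hm⟩ := h1
      obtain ⟨l, hl⟩ := h2
      have hm0 : (m:ℝ) ≠ 0 := by
        intro h
        rw [zsmul_eq_mul, h, zero_mul] at hm
        exact one_ne_zero hm.symm
      rw [zsmul_eq_mul] at hm hl
      have : Real.sqrt 2 = ((l:ℝ))/(2*m) := by
        have hg' : g = 1/(m:ℝ) := by field_simp at hm ⊢; linarith [hm]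
        rw [hg'] at hl
        field_simp at hl ⊢
        nlinarith [hl]
      have : Irrational (Real.sqrt 2) := irrational_sqrt_two
      apply this.ne_rat ((l:ℚ)/(2*(m:ℚ)))
      rw [‹Real.sqrt 2 = ((l:ℝ))/(2*m)›]
      push_cast
      ring
  -- pick h in the subgroup inside (u²/4, v²/4)
  have hlt : u^2/4 < v^2/4 := by nlinarith
  obtain ⟨h, hmem, hh1, hh2⟩ := hdense.exists_between hlt
  have hmem' : ∃ A B : ℤ, A • (1:ℝ) + B • (2*Real.sqrt 2) = h := by
    rwa [← AddSubgroup.mem_closure_pair]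
  obtain ⟨A, B, hAB⟩ := hmem'
  rw [zsmul_eq_mul, zsmul_eq_mul, mul_one] at hAB
  have hhpos : 0 < h := lt_trans (by positivity) hh1
  -- choose t large
  set m : ℤ := max (3*B + A) (max (2*B + A) 0) with hm
  have hmnn : 0 ≤ m := le_max_of_le_right (le_max_right _ _)
  obtain ⟨t, ht⟩ : ∃ t : ℕ, m ≤ 4^t := by
    refine ⟨m.toNat, ?_⟩
    calc m ≤ (m.toNat : ℤ) := (Int.toNat_of_nonneg hmnn).symm.le
    _ ≤ 4^(m.toNat) := by exact_mod_cast (Nat.lt_pow_self (n := m.toNat) (by norm_num : 1 < 4)).le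
  have hj' : 0 ≤ 4^t - 3*B - A := by
    have : 3*B + A ≤ m := le_max_left _ _
    omega
  have hk' : 0 ≤ 4^t - 2*B - A := by
    have : 2*B + A ≤ m := le_max_of_le_right (le_max_left _ _)
    omega
  set j : ℕ := (4^t - 3*B - A).toNat with hjdef
  set k : ℕ := (4^t - 2*B - A).toNat with hkdef
  have hjz : (j:ℤ) = 4^t - 3*B - A := Int.toNat_of_nonneg hj'
  have hkz : (k:ℤ) = 4^t - 2*B - A := Int.toNat_of_nonneg hk'
  have hjc : (j:ℝ) = 4^t - 3*(B:ℝ) - (A:ℝ) := by exact_mod_cast congrArg (fun z : ℤ => (z:ℝ)) hjz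
  have hkc : (k:ℝ) = 4^t - 2*(B:ℝ) - (A:ℝ) := by exact_mod_cast congrArg (fun z : ℤ => (z:ℝ)) hkz
  have hident : ((2:ℝ)^t)^2 - j*(2*Real.sqrt 2 - 2) - k*(3 - 2*Real.sqrt 2)
      = A + B*(2*Real.sqrt 2) := by
    rw [hjc, hkc]
    have h4 : ((2:ℝ)^t)^2 = 4^t := by
      rw [← pow_mul, mul_comm, pow_mul]
      norm_num
    rw [h4]
    ring
  have hval : ((2:ℝ)^t)^2 - j*(2*Real.sqrt 2 - 2) - k*(3 - 2*Real.sqrt 2) = h := by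
    rw [hident]; linarith [hAB]
  have hpos : 0 < ((2:ℝ)^t)^2 - j*(2*Real.sqrt 2 - 2) - k*(3 - 2*Real.sqrt 2) := by
    rw [hval]; exact hhpos
  have hPfam := pres_family p1 pdouble psum psqrt t j k hpos
  rw [hval] at hPfam
  refine ⟨Real.sqrt h, hPfam, Real.sqrt_pos.mpr hhpos, ?_, ?_⟩
  · nlinarith [Real.sq_sqrt hhpos.le, Real.sqrt_nonneg h]
  · nlinarith [Real.sq_sqrt hhpos.le, Real.sqrt_nonneg h, hu]

end Arith

end BQAux

open BQAux in
/-- Beckman–Quarles for layers: for `n ≥ 2` and `ε > 0`, every automorphism of the unit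
distance graph of the layer `ℝⁿ × [0,ε]` is an isometry. -/
theorem layer_automorphism_isometry (n : ℕ) (hn : 2 ≤ n) (ε : ℝ) (hε : 0 < ε)
    (φ : layerGraphE n ε ≃g layerGraphE n ε) :
    ∀ x y : LayerE n ε, dist (φ x).1 (φ y).1 = dist x.1 y.1 := by
  intro x y
  have pd : ∀ a : ℝ, 0 < a → Pres φ a → Pres φ (2*a) := fun a ha hp => pres_double φ hn ha hp
  have psm : ∀ a b α : ℝ, 0 < a → 0 < b → 0 < α → Pres φ a → Pres φ b → Pres φ α →
      |a^2 - b^2| ≤ 4*α^2 → 2*α < a + b → Pres φ (a+b) :=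
    fun a b α ha hb hα hpa hpb hpα hlow hup => pres_sum φ hn ha hb hα hpa hpb hpα hlow hup
  have psq : ∀ b c : ℝ, 0 < c → c < b → Pres φ b → Pres φ c → Pres φ (Real.sqrt (b^2 - c^2)) :=
    fun b c hc hcb hpb hpc => pres_sqrt φ hn hc hcb hpb hpc
  by_cases hxy : x = y
  · rw [hxy]; simp [dist_self]
  · have hx1 : x.1 ≠ y.1 := fun h => hxy (Subtype.ext h)
    have hd0 : 0 < dist x.1 y.1 := dist_pos.mpr hx1
    have hfx : (φ x).1 ≠ (φ y).1 := fun h => hxy (φ.toEquiv.injective (Subtype.ext h))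
    have hd0' : 0 < dist (φ x).1 (φ y).1 := dist_pos.mpr hfx
    rcases lt_trichotomy (dist (φ x).1 (φ y).1) (dist x.1 y.1) with hlt | he | hgt
    · exfalso
      obtain ⟨a, hPa, ha0, h1, h2⟩ :=
        exists_P_between (pres_one φ) pd psm psq hd0' hlt
      have := (pres_le φ hn ha0 hPa x y).mpr h1.le
      linarith
    · exact he
    · exfalso
      obtain ⟨a, hPa, ha0, h1, h2⟩ :=
        exists_P_between (pres_one φ) pd psm psq hd0 hgt
      have := (pres_le φ hn ha0 hPa x y).mp h1.le
      linarith
end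
end
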